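/- arXiv:1506.01685 — 7 statements merged into one kernel-verified Lean document; each statement's English description precedes it below -/
import Mathlib

section
/- For every m×m matrix a with natural number entries such that every row sum and every column sum equals n (with n ≥ 1), there exists an m×m permutation matrix p such that p(i,j) ≤ a(i,j) for all i,j. -/
/-!
Hall's marriage theorem applied to the bipartite graph of nonzero entries. For a set `s` of
rows whose nonzero entries lie in the set `T` of columns, double counting the entries in
`s × T` gives `n * #s ≤ n * #T`, so Hall's condition holds; a perfect matching of rows to
columns is a permutation supported on the nonzero entries.
-/

open Finset

namespace Matrix

variable {ι κ : Type*} [Fintype κ]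

def rowSupport (a : ι → κ → ℕ) (i : ι) : Finset κ := {j | a i j ≠ 0}

lemma mem_rowSupport {a : ι → κ → ℕ} {i : ι} {j : κ} : j ∈ rowSupport a i ↔ a i j ≠ 0 := by
  simp [rowSupport]

lemma sum_rowSupport (a : ι → κ → ℕ) (i : ι) : ∑ j ∈ rowSupport a i, a i j = ∑ j, a i j :=
  sum_filter_ne_zero univ

variable [Fintype ι] [DecidableEq κ]

lemma card_le_card_biUnion_rowSupport {a : ι → κ → ℕ} {n : ℕ} (hn : 0 < n)
    (hrow : ∀ i, n ≤ ∑ j, a i j) (hcol : ∀ j, ∑ i, a i j ≤ n) (s : Finset ι) :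
    #s ≤ #(s.biUnion (rowSupport a)) := by
  set T := s.biUnion (rowSupport a)
  refine le_of_mul_le_mul_left ?_ hn
  calc n * #s = ∑ _i ∈ s, n := by rw [sum_const, smul_eq_mul, mul_comm]
    _ ≤ ∑ i ∈ s, ∑ j ∈ T, a i j := sum_le_sum fun i hi => calc
        n ≤ ∑ j, a i j := hrow i
        _ = ∑ j ∈ rowSupport a i, a i j := (sum_rowSupport a i).symm
        _ ≤ ∑ j ∈ T, a i j := sum_le_sum_of_subset (subset_biUnion_of_mem _ hi)
    _ = ∑ j ∈ T, ∑ i ∈ s, a i j := sum_comm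
    _ ≤ ∑ j ∈ T, ∑ i, a i j := sum_le_sum fun j _ => sum_le_sum_of_subset (subset_univ s)
    _ ≤ ∑ _j ∈ T, n := sum_le_sum fun j _ => hcol j
    _ = n * #T := by rw [sum_const, smul_eq_mul, mul_comm]

lemma exists_injective_forall_ne_zero {a : ι → κ → ℕ} {n : ℕ} (hn : 0 < n)
    (hrow : ∀ i, n ≤ ∑ j, a i j) (hcol : ∀ j, ∑ i, a i j ≤ n) :
    ∃ f : ι → κ, Function.Injective f ∧ ∀ i, a i (f i) ≠ 0 := by
  obtain ⟨f, hf, hsupp⟩ := (all_card_le_biUnion_card_iff_existsInjective' (rowSupport a)).mp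
    (card_le_card_biUnion_rowSupport hn hrow hcol)
  exact ⟨f, hf, fun i => mem_rowSupport.mp (hsupp i)⟩

end Matrix

/-- For every m×m matrix `a` with natural number entries such that every
row sum and every column sum equals `n` (with `n ≥ 1`), there exists a permutation
matrix `p` (the matrix of a permutation `σ` of `Fin m`) such that `p i j ≤ a i j`
for all `i, j`. -/
theorem birkhoff_von_neumann_step (m n : ℕ) (hn : 1 ≤ n) (a : Fin m → Fin m → ℕ)
    (hrow : ∀ i : Fin m, ∑ k : Fin m, a i k = n)
    (hcol : ∀ j : Fin m, ∑ k : Fin m, a k j = n) :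
    ∃ σ : Equiv.Perm (Fin m), ∀ i j : Fin m,
      (if σ i = j then 1 else 0) ≤ a i j := by
  obtain ⟨f, hf, hpos⟩ :=
    Matrix.exists_injective_forall_ne_zero hn (fun i => (hrow i).ge) (fun j => (hcol j).le)
  refine ⟨Equiv.ofBijective f (Finite.injective_iff_bijective.mp hf), fun i j => ?_⟩
  split_ifs with h
  · exact Nat.one_le_iff_ne_zero.mpr (h ▸ hpos i)
  · exact Nat.zero_le _
end

section
/- Every m×m matrix with natural number entries whose row sums and column sums all equal n can be written as a sum of n permutation matrices. -/
/-- Every m×m matrix with natural number entries whose row sums and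
column sums all equal `n` can be written as a sum of `n` permutation matrices. -/
theorem birkhoff_von_neumann (m n : ℕ) (a : Fin m → Fin m → ℕ)
    (hrow : ∀ i : Fin m, ∑ k : Fin m, a i k = n)
    (hcol : ∀ j : Fin m, ∑ k : Fin m, a k j = n) :
    ∃ σ : Fin n → Equiv.Perm (Fin m), ∀ i j : Fin m,
      a i j = ∑ t : Fin n, (if (σ t) i = j then 1 else 0) := by
  induction n generalizing a with
  | zero =>
    refine ⟨fun t => t.elim0, fun i j => ?_⟩
    simp only [Finset.univ_eq_empty, Finset.sum_empty]
    exact Finset.sum_eq_zero_iff.mp (hrow i) j (Finset.mem_univ j)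
  | succ n ih =>
    set t : Fin m → Finset (Fin m) := fun i => Finset.univ.filter (fun j => 0 < a i j) with ht
    have hall : ∀ s : Finset (Fin m), s.card ≤ (s.biUnion t).card := by
      intro s
      have h1 : ∑ i ∈ s, ∑ k ∈ s.biUnion t, a i k = s.card * (n+1) := by
        have : ∀ i ∈ s, ∑ k ∈ s.biUnion t, a i k = ∑ k : Fin m, a i k := by
          intro i hi
          refine Finset.sum_subset (Finset.subset_univ _) ?_
          intro k _ hk
          by_contra hne
          exact hk (Finset.mem_biUnion.mpr ⟨i, hi, by
            simp [ht, Nat.pos_of_ne_zero hne]⟩)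
        rw [Finset.sum_congr rfl this]
        simp [hrow, Finset.sum_const, mul_comm]
      have h2 : ∑ i ∈ s, ∑ k ∈ s.biUnion t, a i k ≤ (s.biUnion t).card * (n+1) := by
        calc ∑ i ∈ s, ∑ k ∈ s.biUnion t, a i k
            ≤ ∑ i : Fin m, ∑ k ∈ s.biUnion t, a i k :=
              Finset.sum_le_sum_of_subset (Finset.subset_univ s)
          _ = ∑ k ∈ s.biUnion t, ∑ i : Fin m, a i k := Finset.sum_comm
          _ = (s.biUnion t).card * (n+1) := by simp [hcol, mul_comm]
      have := h1 ▸ h2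
      exact Nat.le_of_mul_le_mul_right this (Nat.succ_pos n)
    obtain ⟨f, hfinj, hf⟩ :=
      (Finset.all_card_le_biUnion_card_iff_exists_injective t).mp hall
    have hfa : ∀ i, 0 < a i (f i) := by
      intro i
      have := hf i
      simp [ht] at this
      exact this
    have hbij : Function.Bijective f := (Finite.injective_iff_bijective).mp hfinj
    let e : Equiv.Perm (Fin m) := Equiv.ofBijective f hbij
    set a' : Fin m → Fin m → ℕ := fun i j => a i j - (if f i = j then 1 else 0) with ha'
    have key : ∀ i j, a i j = a' i j + (if f i = j then 1 else 0) := by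
      intro i j
      simp only [ha']
      split
      · next h => have := hfa i; rw [h] at this; omega
      · omega
    have hrow' : ∀ i, ∑ k : Fin m, a' i k = n := by
      intro i
      have : ∑ k : Fin m, a i k = (∑ k : Fin m, a' i k) + ∑ k : Fin m, (if f i = k then 1 else 0) := by
        rw [← Finset.sum_add_distrib]; exact Finset.sum_congr rfl fun k _ => key i k
      rw [hrow i] at this
      simp [Finset.sum_ite_eq] at this
      omega
    have hcol' : ∀ j, ∑ k : Fin m, a' k j = n := by
      intro j
      have : ∑ k : Fin m, a k j = (∑ k : Fin m, a' k j) + ∑ k : Fin m, (if f k = j then 1 else 0) := by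
        rw [← Finset.sum_add_distrib]; exact Finset.sum_congr rfl fun k _ => key k j
      rw [hcol j] at this
      have hsum1 : ∑ k : Fin m, (if f k = j then 1 else 0) = 1 := by
        have hek : ∀ k, e k = f k := fun k => rfl
        have : ∀ k, f k = j ↔ k = e.symm j := by
          intro k
          rw [← hek, ← Equiv.apply_eq_iff_eq_symm_apply]
        simp only [this]
        simp [Finset.sum_ite_eq']
      rw [hsum1] at this
      omega
    obtain ⟨σ', hσ'⟩ := ih a' hrow' hcol'
    refine ⟨Fin.cons e σ', fun i j => ?_⟩
    rw [Fin.sum_univ_succ]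
    simp only [Fin.cons_zero, Fin.cons_succ]
    rw [key i j, ← hσ' i j]
    have : (e i = j) ↔ (f i = j) := Iff.rfl
    simp only [this]
    omega
end

section
/- Let a : ℕ × ℕ → ℕ be a matrix with natural number entries such that every row sum and every column sum equals n ≥ 1 (each row and column having finitely many nonzero entries). Then there exists a bijection σ : ℕ → ℕ such that a(i, σ(i)) ≥ 1 for all i. -/
open scoped BigOperators

/-- Schröder–Bernstein with a relation: given two injections picking related
elements in each direction, there is a bijection picking related elements. -/
lemma csb_rel {P : ℕ → ℕ → Prop} {f g : ℕ → ℕ} (hf : Function.Injective f)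
    (hg : Function.Injective g) (hPf : ∀ i, P i (f i)) (hPg : ∀ j, P (g j) j) :
    ∃ σ : ℕ ≃ ℕ, ∀ i, P i (σ i) := by
  classical
  set A : Set ℕ := ⋃ m, (g ∘ f)^[m] '' (Set.range g)ᶜ with hA
  have hA0 : (Set.range g)ᶜ ⊆ A := by
    intro x hx
    exact Set.mem_iUnion.2 ⟨0, by simpa using hx⟩
  have hAstep : ∀ x ∈ A, g (f x) ∈ A := by
    intro x hx
    obtain ⟨m, y, hy, rfl⟩ := Set.mem_iUnion.1 hx
    exact Set.mem_iUnion.2 ⟨m + 1, y, hy, by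
      rw [Function.iterate_succ']; rfl⟩
  have hrange : ∀ x, x ∉ A → x ∈ Set.range g := by
    intro x hx
    by_contra h
    exact hx (hA0 h)
  set h : ℕ → ℕ := fun i => if i ∈ A then f i else Function.invFun g i with hh
  have hginv : ∀ x, x ∉ A → g (h x) = x := by
    intro x hx
    simp only [hh, if_neg hx]
    exact Function.invFun_eq (hrange x hx)
  have hfa : ∀ x, x ∈ A → h x = f x := fun x hx => if_pos hx
  have hinj : Function.Injective h := by
    intro x y hxy
    by_cases hx : x ∈ A <;> by_cases hy : y ∈ A
    · rw [hfa x hx, hfa y hy] at hxy; exact hf hxy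
    · exfalso
      have h1 := hginv y hy
      rw [← hxy, hfa x hx] at h1
      exact hy (h1 ▸ hAstep x hx)
    · exfalso
      have h1 := hginv x hx
      rw [hxy, hfa y hy] at h1
      exact hx (h1 ▸ hAstep y hy)
    · have h1 := (hginv x hx).symm.trans ((congrArg g hxy).trans (hginv y hy))
      exact h1
  have hsurj : Function.Surjective h := by
    intro j
    by_cases hgj : g j ∈ A
    · obtain ⟨m, y, hy, hey⟩ := Set.mem_iUnion.1 hgj
      cases m with
      | zero => exact absurd ⟨j, hey.symm⟩ hy
      | succ m =>
        rw [Function.iterate_succ'] at hey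
        set x := (g ∘ f)^[m] y with hx
        have hxA : x ∈ A := Set.mem_iUnion.2 ⟨m, y, hy, rfl⟩
        have : g (f x) = g j := hey
        have hfx : f x = j := hg this
        exact ⟨x, by rw [hfa x hxA, hfx]⟩
    · refine ⟨g j, ?_⟩
      have := hginv (g j) hgj
      exact hg this
  refine ⟨Equiv.ofBijective h ⟨hinj, hsurj⟩, ?_⟩
  intro i
  show P i (h i)
  by_cases hi : i ∈ A
  · rw [hfa i hi]; exact hPf i
  · have := hginv i hi
    have := hPg (h i)
    rwa [hginv i hi] at this

/-- Hall-type injection from a regular doubly stochastic matrix. -/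
lemma hall_of_regular (n : ℕ) (hn : 1 ≤ n) (a : ℕ → ℕ → ℕ)
    (hrowfin : ∀ i, (Function.support (fun k => a i k)).Finite)
    (hcolfin : ∀ j, (Function.support (fun k => a k j)).Finite)
    (hrow : ∀ i, ∑ᶠ k, a i k = n)
    (hcol : ∀ j, ∑ᶠ k, a k j ≤ n) :
    ∃ f : ℕ → ℕ, Function.Injective f ∧ ∀ i, 1 ≤ a i (f i) := by
  classical
  set t : ℕ → Finset ℕ := fun i => (hrowfin i).toFinset with ht
  have hmem : ∀ i j, j ∈ t i ↔ a i j ≠ 0 := by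
    intro i j
    simp [ht, Set.Finite.mem_toFinset, Function.mem_support]
  have hall : ∀ s : Finset ℕ, s.card ≤ (s.biUnion t).card := by
    intro s
    set B := s.biUnion t with hB
    have key : n * s.card ≤ n * B.card := by
      calc n * s.card = ∑ i ∈ s, n := by simp [Finset.sum_const, Nat.mul_comm]
        _ = ∑ i ∈ s, ∑ j ∈ B, a i j := by
            refine Finset.sum_congr rfl fun i hi => ?_
            rw [← hrow i]
            refine (finsum_eq_sum_of_support_subset _ ?_)
            intro j hj
            exact Finset.mem_coe.2 (Finset.mem_biUnion.2 ⟨i, hi, (hmem i j).2 hj⟩)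
        _ = ∑ j ∈ B, ∑ i ∈ s, a i j := Finset.sum_comm
        _ ≤ ∑ j ∈ B, n := by
            refine Finset.sum_le_sum fun j _ => ?_
            calc ∑ i ∈ s, a i j ≤ ∑ i ∈ s ∪ (hcolfin j).toFinset, a i j :=
                  Finset.sum_le_sum_of_subset Finset.subset_union_left
              _ = ∑ᶠ i, a i j := by
                  refine (finsum_eq_sum_of_support_subset _ ?_).symm
                  intro i hi
                  exact Finset.mem_coe.2 (Finset.mem_union_right _
                    ((hcolfin j).mem_toFinset.2 hi))
              _ ≤ n := hcol j
        _ = n * B.card := by simp [Finset.sum_const, Nat.mul_comm]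
    exact Nat.le_of_mul_le_mul_left key hn
  obtain ⟨f, hfinj, hft⟩ := (Finset.all_card_le_biUnion_card_iff_exists_injective t).1 hall
  exact ⟨f, hfinj, fun i => Nat.one_le_iff_ne_zero.2 ((hmem i (f i)).1 (hft i))⟩

/-- Let `a : ℕ → ℕ → ℕ` be an infinite matrix with natural number entries,
with finitely many nonzero entries in each row and column, such that every row sum and
every column sum equals `n ≥ 1`. Then there exists a bijection `σ : ℕ → ℕ` such that
`a i (σ i) ≥ 1` for all `i`. -/
theorem infinite_birkhoff_von_neumann_step (n : ℕ) (hn : 1 ≤ n) (a : ℕ → ℕ → ℕ)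
    (hrowfin : ∀ i, (Function.support (fun k => a i k)).Finite)
    (hcolfin : ∀ j, (Function.support (fun k => a k j)).Finite)
    (hrow : ∀ i, ∑ᶠ k, a i k = n)
    (hcol : ∀ j, ∑ᶠ k, a k j = n) :
    ∃ σ : ℕ ≃ ℕ, ∀ i, 1 ≤ a i (σ i) := by
  obtain ⟨f, hfinj, hfP⟩ := hall_of_regular n hn a hrowfin hcolfin hrow
    (fun j => le_of_eq (hcol j))
  obtain ⟨g, hginj, hgP⟩ := hall_of_regular n hn (fun j i => a i j) hcolfin hrowfin hcol
    (fun i => le_of_eq (hrow i))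
  exact csb_rel (P := fun i j => 1 ≤ a i j) hfinj hginj hfP hgP
end

section
/- Every infinite doubly stochastic element of multiplicity n is equivalent to a finite doubly stochastic element, i.e., given a countable family {φ_i : A_i → B_i} of partial isomorphisms in [[E]] with ∑_i χ_{A_i} = n·1 and ∑_i χ_{B_i} = n·1 a.e., there exists a finite family {ψ_j : j=1,…,m} in [[E]] with the same associated matrix ∑_j χ(graph ψ_j) = ∑_i χ(graph φ_i). -/
open MeasureTheory
open scoped Classical ENNReal

/-- A measure-preserving partial isomorphism with domain `A`, given by the restriction of
`f` to `A`, whose graph is contained in the equivalence relation `E` (an element of `[[E]]`). -/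
def IsPartialIso {X : Type*} [MeasurableSpace X] (μ : Measure X) (E : Set (X × X))
    (A : Set X) (f : X → X) : Prop :=
  MeasurableSet A ∧ Measurable f ∧ Set.InjOn f A ∧ MeasurableSet (f '' A) ∧
    (∀ x ∈ A, (x, f x) ∈ E) ∧
    ∀ s ⊆ A, MeasurableSet s → μ (f '' s) = μ s

/-! For `x ∈ A i`, let `j` be the rank of `i` among the indices whose domain contains `x`, and
`k` its rank among the indices whose range contains `f i x`. By the row condition, and the column
condition pulled back along `f i` (which preserves null sets), almost everywhere `j, k < n`. For
fixed `(j, k)` the pieces `{x ∈ A i | ranks (j, k)}` are disjoint in `i`, and so are their images,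
so the `f i` glue to one partial isomorphism `ψ_{jk}` (its images are measurable by
Lusin–Souslin). Each entry `(x, f i x)` of the matrix is then produced by exactly one of the `n²`
maps `ψ_{jk}`. -/

open Function

theorem Nat.count_lt_of_tsum_ite_eq {p : ℕ → Prop} {n i : ℕ}
    (h : ∑' k, (if p k then (1 : ℝ≥0∞) else 0) = n) (hi : p i) : Nat.count p i < n := by
  have : (Nat.count p i + 1 : ℝ≥0∞) ≤ n := calc
    _ = ∑ k ∈ Finset.range (i + 1), (if p k then (1 : ℝ≥0∞) else 0) := by
      rw [Finset.sum_boole, ← Nat.count_eq_card_filter_range, Nat.count_succ, if_pos hi]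
      push_cast; rfl
    _ ≤ ∑' k, (if p k then (1 : ℝ≥0∞) else 0) := ENNReal.sum_le_tsum _
    _ = n := h
  exact_mod_cast this

theorem measurable_count_mem {X : Type*} [MeasurableSpace X] {S : ℕ → Set X}
    (hS : ∀ i, MeasurableSet (S i)) (k : ℕ) :
    Measurable fun x => Nat.count (fun i => x ∈ S i) k := by
  induction k with
  | zero => simp
  | succ k ih =>
    simp only [Nat.count_succ]
    exact ih.add (Measurable.ite (hS k) measurable_const measurable_const)

namespace IsPartialIso

variable {X : Type*} [MeasurableSpace X] {μ : Measure X} {E : Set (X × X)} {A s : Set X}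
  {f : X → X}

theorem measurableSet_image [StandardBorelSpace X] (h : IsPartialIso μ E A f) (hs : s ⊆ A)
    (hsm : MeasurableSet s) : MeasurableSet (f '' s) :=
  hsm.image_of_measurable_injOn h.2.1 (h.2.2.1.mono hs)

theorem mono [StandardBorelSpace X] (h : IsPartialIso μ E A f) (hs : s ⊆ A)
    (hsm : MeasurableSet s) : IsPartialIso μ E s f :=
  ⟨hsm, h.2.1, h.2.2.1.mono hs, h.measurableSet_image hs hsm, fun x hx => h.2.2.2.2.1 x (hs hx),
    fun t ht => h.2.2.2.2.2 t (ht.trans hs)⟩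

theorem ae_imp_of_ae_image (h : IsPartialIso μ E A f) {p : X → Prop} (hp : ∀ᵐ y ∂μ, p y) :
    ∀ᵐ x ∂μ, x ∈ A → p (f x) := by
  set N := toMeasurable μ {y | ¬p y}
  have hN : μ N = 0 := by rw [measure_toMeasurable]; exact hp
  have hpre : MeasurableSet (A ∩ f ⁻¹' N) := h.1.inter (h.2.1 (measurableSet_toMeasurable _ _))
  have hnull : μ (A ∩ f ⁻¹' N) = 0 := by
    rw [← h.2.2.2.2.2 _ Set.inter_subset_left hpre]
    exact measure_mono_null (Set.image_subset_iff.2 Set.inter_subset_right) hN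
  filter_upwards [measure_eq_zero_iff_ae_notMem.1 hnull] with x hx hxA
  by_contra hpx
  exact hx ⟨hxA, subset_toMeasurable μ _ hpx⟩

end IsPartialIso

section Glue
variable {X ι : Type*} {P : ι → Set X} {f : ι → X → X} {x : X} {i : ι}

noncomputable def glueMaps (P : ι → Set X) (f : ι → X → X) (x : X) : X :=
  if h : ∃ i, x ∈ P i then f h.choose x else x

theorem glueMaps_of_mem (hP : Pairwise (Disjoint on P)) (hx : x ∈ P i) :
    glueMaps P f x = f i x := by
  have h : ∃ i, x ∈ P i := ⟨i, hx⟩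
  rw [glueMaps, dif_pos h, hP.eq (Set.not_disjoint_iff.2 ⟨x, h.choose_spec, hx⟩)]

theorem glueMaps_of_notMem (hx : x ∉ ⋃ i, P i) : glueMaps P f x = x :=
  dif_neg (by simpa using hx)

theorem image_glueMaps (hP : Pairwise (Disjoint on P)) {s : Set X} (hs : s ⊆ ⋃ i, P i) :
    glueMaps P f '' s = ⋃ i, f i '' (s ∩ P i) := by
  ext y
  simp only [Set.mem_image, Set.mem_iUnion, Set.mem_inter_iff]
  constructor
  · rintro ⟨x, hxs, rfl⟩
    obtain ⟨i, hi⟩ := Set.mem_iUnion.1 (hs hxs)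
    exact ⟨i, x, ⟨hxs, hi⟩, (glueMaps_of_mem hP hi).symm⟩
  · rintro ⟨i, x, ⟨hxs, hi⟩, rfl⟩
    exact ⟨x, hxs, glueMaps_of_mem hP hi⟩

theorem ite_glueMaps_eq_tsum (hP : Pairwise (Disjoint on P)) (x y : X) :
    (if x ∈ ⋃ i, P i ∧ glueMaps P f x = y then (1 : ℝ≥0∞) else 0) =
      ∑' i, if x ∈ P i ∧ f i x = y then (1 : ℝ≥0∞) else 0 := by
  by_cases hx : x ∈ ⋃ i, P i
  · obtain ⟨i, hi⟩ := Set.mem_iUnion.1 hx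
    rw [tsum_eq_single i fun i' hi' => if_neg fun h => hi' (hP.eq
      (Set.not_disjoint_iff.2 ⟨x, h.1, hi⟩)), glueMaps_of_mem hP hi]
    simp [hx, hi]
  · simp only [Set.mem_iUnion, not_exists] at hx
    simp [hx]

variable [MeasurableSpace X]

theorem measurable_glueMaps [Countable ι] (hP : Pairwise (Disjoint on P))
    (hPm : ∀ i, MeasurableSet (P i)) (hf : ∀ i, Measurable (f i)) : Measurable (glueMaps P f) := by
  intro t ht
  have : glueMaps P f ⁻¹' t = (⋃ i, P i ∩ f i ⁻¹' t) ∪ ((⋃ i, P i)ᶜ ∩ t) := by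
    ext x
    by_cases hx : x ∈ ⋃ i, P i
    · obtain ⟨i, hi⟩ := Set.mem_iUnion.1 hx
      simp only [Set.mem_preimage, glueMaps_of_mem hP hi, Set.mem_union, Set.mem_iUnion,
        Set.mem_inter_iff, Set.mem_compl_iff, hx, not_true_eq_false, false_and, or_false]
      exact ⟨fun h => ⟨i, hi, h⟩, fun ⟨i', hi', h⟩ => (hP.eq
        (Set.not_disjoint_iff.2 ⟨x, hi', hi⟩) : i' = i) ▸ h⟩
    · simp_all [glueMaps_of_notMem hx]
  rw [this]
  exact (MeasurableSet.iUnion fun i => (hPm i).inter (hf i ht)).union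
    ((MeasurableSet.iUnion hPm).compl.inter ht)

theorem isPartialIso_glueMaps [StandardBorelSpace X] [Countable ι] {μ : Measure X}
    {E : Set (X × X)} (h : ∀ i, IsPartialIso μ E (P i) (f i)) (hP : Pairwise (Disjoint on P))
    (hPf : Pairwise (Disjoint on fun i => f i '' P i)) :
    IsPartialIso μ E (⋃ i, P i) (glueMaps P f) := by
  have himage {s : Set X} (hs : s ⊆ ⋃ i, P i) (hsm : MeasurableSet s) :
      MeasurableSet (glueMaps P f '' s) := by
    rw [image_glueMaps hP hs]
    exact .iUnion fun i => (h i).measurableSet_image Set.inter_subset_right (hsm.inter (h i).1)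
  refine ⟨.iUnion fun i => (h i).1, measurable_glueMaps hP (fun i => (h i).1) fun i => (h i).2.1,
    ?_, himage subset_rfl (.iUnion fun i => (h i).1), ?_, ?_⟩
  · intro x hx x' hx' hxx'
    obtain ⟨i, hi⟩ := Set.mem_iUnion.1 hx
    obtain ⟨i', hi'⟩ := Set.mem_iUnion.1 hx'
    rw [glueMaps_of_mem hP hi, glueMaps_of_mem hP hi'] at hxx'
    obtain rfl : i = i' := hPf.eq (Set.not_disjoint_iff.2 ⟨_, ⟨x, hi, hxx'⟩, ⟨x', hi', rfl⟩⟩)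
    exact (h i).2.2.1 hi hi' hxx'
  · intro x hx
    obtain ⟨i, hi⟩ := Set.mem_iUnion.1 hx
    rw [glueMaps_of_mem hP hi]
    exact (h i).2.2.2.2.1 x hi
  · intro s hs hsm
    have hpieces : ∀ i, MeasurableSet (s ∩ P i) := fun i => hsm.inter (h i).1
    rw [image_glueMaps hP hs, measure_iUnion (fun i i' hii' => (hPf hii').mono
        (Set.image_mono Set.inter_subset_right) (Set.image_mono Set.inter_subset_right))
        fun i => (h i).measurableSet_image Set.inter_subset_right (hpieces i)]
    rw [tsum_congr fun i => (h i).2.2.2.2.2 _ Set.inter_subset_right (hpieces i),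
      ← measure_iUnion (fun i i' hii' => (hP hii').mono Set.inter_subset_right
        Set.inter_subset_right) hpieces, ← Set.inter_iUnion, Set.inter_eq_left.2 hs]

end Glue

section RankPiece
variable {X : Type*} {A : ℕ → Set X} {f : ℕ → X → X}

def rankPiece (A : ℕ → Set X) (f : ℕ → X → X) (j k i : ℕ) : Set X :=
  {x | x ∈ A i ∧ Nat.count (fun i' => x ∈ A i') i = j ∧
    Nat.count (fun i' => f i x ∈ f i' '' A i') i = k}

theorem rankPiece_subset (j k i : ℕ) : rankPiece A f j k i ⊆ A i := fun _ hx => hx.1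

theorem pairwise_disjoint_rankPiece (j k : ℕ) :
    Pairwise (Disjoint on fun i => rankPiece A f j k i) := fun _ _ hii' =>
  Set.disjoint_left.2 fun _ hx hx' =>
    hii' (Nat.count_injective hx.1 hx'.1 (hx.2.1.trans hx'.2.1.symm))

theorem pairwise_disjoint_image_rankPiece (j k : ℕ) :
    Pairwise (Disjoint on fun i => f i '' rankPiece A f j k i) := by
  refine fun i i' hii' => Set.disjoint_left.2 ?_
  rintro _ ⟨x, hx, rfl⟩ ⟨x', hx', hxx'⟩
  exact hii' (Nat.count_injective ⟨x, hx.1, rfl⟩ ⟨x', hx'.1, hxx'⟩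
    (hx.2.2.trans (hxx' ▸ hx'.2.2).symm))

theorem sum_ite_mem_rankPiece {n i : ℕ} {x : X} (y : X)
    (hx : x ∈ A i → Nat.count (fun i' => x ∈ A i') i < n ∧
      Nat.count (fun i' => f i x ∈ f i' '' A i') i < n) :
    ∑ p : Fin n × Fin n, (if x ∈ rankPiece A f p.1 p.2 i ∧ f i x = y then (1 : ℝ≥0∞) else 0) =
      if x ∈ A i ∧ f i x = y then 1 else 0 := by
  by_cases hxA : x ∈ A i
  · obtain ⟨hrow, hcol⟩ := hx hxA
    rw [Finset.sum_eq_single_of_mem (⟨_, hrow⟩, ⟨_, hcol⟩) (Finset.mem_univ _)]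
    · simp [rankPiece, hxA]
    · rintro ⟨j, k⟩ - hjk
      refine if_neg fun h => hjk ?_
      obtain ⟨-, hj, hk⟩ := h.1
      ext
      exacts [hj.symm, hk.symm]
  · simp [rankPiece, hxA]

variable [MeasurableSpace X]

theorem measurableSet_rankPiece (hA : ∀ i, MeasurableSet (A i)) (hf : ∀ i, Measurable (f i))
    (hfA : ∀ i, MeasurableSet (f i '' A i)) (j k i : ℕ) : MeasurableSet (rankPiece A f j k i) :=
  (hA i).inter <| (measurable_count_mem hA i (measurableSet_singleton j)).inter
    ((measurable_count_mem hfA i).comp (hf i) (measurableSet_singleton k))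

theorem isPartialIso_glueMaps_rankPiece [StandardBorelSpace X] {μ : Measure X} {E : Set (X × X)}
    (hiso : ∀ i, IsPartialIso μ E (A i) (f i)) (j k : ℕ) :
    IsPartialIso μ E (⋃ i, rankPiece A f j k i) (glueMaps (rankPiece A f j k) f) :=
  isPartialIso_glueMaps
    (fun i => (hiso i).mono (rankPiece_subset j k i) (measurableSet_rankPiece
      (fun i => (hiso i).1) (fun i => (hiso i).2.1) (fun i => (hiso i).2.2.2.1) j k i))
    (pairwise_disjoint_rankPiece j k) (pairwise_disjoint_image_rankPiece j k)

theorem ae_count_lt_of_tsum_eq {μ : Measure X} {E : Set (X × X)} {n : ℕ}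
    (hiso : ∀ i, IsPartialIso μ E (A i) (f i))
    (hrow : ∀ᵐ x ∂μ, ∑' i : ℕ, (A i).indicator (fun _ => (1 : ℝ≥0∞)) x = (n : ℝ≥0∞))
    (hcol : ∀ᵐ y ∂μ, ∑' i : ℕ, (f i '' A i).indicator (fun _ => (1 : ℝ≥0∞)) y = (n : ℝ≥0∞)) :
    ∀ᵐ x ∂μ, ∀ i, x ∈ A i → Nat.count (fun i' => x ∈ A i') i < n ∧
      Nat.count (fun i' => f i x ∈ f i' '' A i') i < n := by
  have hcol' : ∀ i, ∀ᵐ x ∂μ, x ∈ A i →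
      ∑' i' : ℕ, (f i' '' A i').indicator (fun _ => (1 : ℝ≥0∞)) (f i x) = n :=
    fun i => (hiso i).ae_imp_of_ae_image hcol
  filter_upwards [hrow, ae_all_iff.2 hcol'] with x hxrow hxcol i hxA
  simp only [Set.indicator_apply] at hxrow hxcol
  exact ⟨Nat.count_lt_of_tsum_ite_eq hxrow hxA,
    Nat.count_lt_of_tsum_ite_eq (hxcol i hxA) ⟨x, hxA, rfl⟩⟩

end RankPiece

theorem infinite_DSE_equivalent_to_finite_general
    {X : Type*} [MeasurableSpace X] [StandardBorelSpace X]
    (μ : Measure X)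
    (E : Set (X × X))
    (n : ℕ) (A : ℕ → Set X) (f : ℕ → X → X)
    (hiso : ∀ i, IsPartialIso μ E (A i) (f i))
    (hrow : ∀ᵐ x ∂μ, ∑' i : ℕ, (A i).indicator (fun _ => (1 : ℝ≥0∞)) x = (n : ℝ≥0∞))
    (hcol : ∀ᵐ y ∂μ, ∑' i : ℕ, (f i '' A i).indicator (fun _ => (1 : ℝ≥0∞)) y = (n : ℝ≥0∞)) :
    ∃ (m : ℕ) (B : Fin m → Set X) (g : Fin m → X → X),
      (∀ j, IsPartialIso μ E (B j) (g j)) ∧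
      ∀ᵐ x ∂μ, ∀ y : X,
        (∑ j : Fin m, if x ∈ B j ∧ g j x = y then (1 : ℝ≥0∞) else 0) =
          ∑' i : ℕ, if x ∈ A i ∧ f i x = y then (1 : ℝ≥0∞) else 0 := by
  let piece (q : Fin (n * n)) :=
    rankPiece A f (finProdFinEquiv.symm q).1 (finProdFinEquiv.symm q).2
  refine ⟨n * n, fun q => ⋃ i, piece q i, fun q => glueMaps (piece q) f,
    fun q => isPartialIso_glueMaps_rankPiece hiso _ _, ?_⟩
  filter_upwards [ae_count_lt_of_tsum_eq hiso hrow hcol] with x hx y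
  rw [← finProdFinEquiv.sum_comp]
  simp only [piece, Equiv.symm_apply_apply, ite_glueMaps_eq_tsum (pairwise_disjoint_rankPiece _ _)]
  rw [← Summable.tsum_finsetSum fun _ _ => ENNReal.summable]
  exact tsum_congr fun i => sum_ite_mem_rankPiece y (hx i)

/-- every infinite (countable) doubly stochastic element of multiplicity `n`
is equivalent to a finite one: given a countable family `{φ_i : A_i → B_i} ⊆ [[E]]` with
`∑_i χ_{A_i} = n` and `∑_i χ_{B_i} = n` a.e., there is a finite family `{ψ_j} ⊆ [[E]]`
with the same associated matrix `∑_j χ(graph ψ_j) = ∑_i χ(graph φ_i)` (a.e.). -/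
theorem infinite_DSE_equivalent_to_finite
    {X : Type*} [MeasurableSpace X] [StandardBorelSpace X]
    (μ : Measure X) [IsProbabilityMeasure μ]
    (E : Set (X × X)) (hE : Equivalence fun x y => (x, y) ∈ E)
    (hcnt : ∀ x, {y | (x, y) ∈ E}.Countable)
    (n : ℕ) (A : ℕ → Set X) (f : ℕ → X → X)
    (hiso : ∀ i, IsPartialIso μ E (A i) (f i))
    (hrow : ∀ᵐ x ∂μ, ∑' i : ℕ, (A i).indicator (fun _ => (1 : ℝ≥0∞)) x = (n : ℝ≥0∞))
    (hcol : ∀ᵐ y ∂μ, ∑' i : ℕ, (f i '' A i).indicator (fun _ => (1 : ℝ≥0∞)) y = (n : ℝ≥0∞)) :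
    ∃ (m : ℕ) (B : Fin m → Set X) (g : Fin m → X → X),
      (∀ j, IsPartialIso μ E (B j) (g j)) ∧
      ∀ᵐ x ∂μ, ∀ y : X,
        (∑ j : Fin m, if x ∈ B j ∧ g j x = y then (1 : ℝ≥0∞) else 0) =
          ∑' i : ℕ, if x ∈ A i ∧ f i x = y then (1 : ℝ≥0∞) else 0 :=
  infinite_DSE_equivalent_to_finite_general μ E n A f hiso hrow hcol
end

section
/- Let φ_1, φ_2 : [0,1] → [0,1] be defined by φ_1(x) = 1 − x and φ_2(x) = 3/2^{n+1} − x for x ∈ (1/2^{n+1}, 1/2^n). Then the composition φ_2 ∘ φ_1 is ergodic with respect to Lebesgue measure on [0,1]. -/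
/-!
Writing `x ∈ (0, 1]` in binary, `T = φ₂ ∘ φ₁` adds `1/2` with carry to the right: it is the
dyadic odometer. An invariant set `s` has equal mass in `(0, 1/2]` and `(1/2, 1]`, because `T`
translates the first onto the second and, up to a null set, maps nothing else there. Since
`T (T (x / 2)) = T x / 2`, the rescaled set `{x | x / 2 ∈ s}` is again invariant, with the same
mass as `s`. Induction on `n` then gives `μ (s ∩ I) = μ s * μ I` for every dyadic interval `I` of
length `2⁻ⁿ`; these intervals generate the Borel sets, so `μ (s ∩ s) = μ s * μ s` and
`μ s ∈ {0, 1}`.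
-/

open MeasureTheory Set Filter
open scoped ENNReal

theorem Real.dense_range_dyadic : Dense (range fun p : ℕ × ℤ => (p.2 : ℝ) / 2 ^ p.1) := by
  refine dense_of_exists_between fun a b hab => ?_
  obtain ⟨n, hn⟩ := exists_pow_lt_of_lt_one (sub_pos.2 hab) one_half_lt_one
  have h2n : (0 : ℝ) < 2 ^ n := by positivity
  rw [one_div_pow, div_lt_iff₀ h2n] at hn
  have hfloor := Int.floor_le (a * 2 ^ n)
  have hlt := Int.lt_floor_add_one (a * 2 ^ n)
  refine ⟨_, ⟨(n, ⌊a * 2 ^ n⌋ + 1), rfl⟩, ?_, ?_⟩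
  · rw [lt_div_iff₀ h2n]; push_cast; linarith
  · rw [div_lt_iff₀ h2n]; push_cast; nlinarith

theorem MeasureTheory.Measure.measure_Ioc_eq_of_forall_Ioc_succ {α : Type*} [LinearOrder α]
    [TopologicalSpace α] [OrderClosedTopology α] [MeasurableSpace α] [OpensMeasurableSpace α]
    {ν₁ ν₂ : Measure α} {g : ℤ → α} (hg : Monotone g)
    (h : ∀ j, ν₁ (Ioc (g j) (g (j + 1))) = ν₂ (Ioc (g j) (g (j + 1)))) {a b : ℤ} (hab : a ≤ b) :
    ν₁ (Ioc (g a) (g b)) = ν₂ (Ioc (g a) (g b)) := by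
  induction b, hab using Int.leInduction with
  | base => simp
  | succ b hab ih =>
    have hdisj := Ioc_disjoint_Ioc_of_le (a := g a) (d := g (b + 1)) (le_refl (g b))
    rw [← Ioc_union_Ioc_eq_Ioc (hg hab) (hg (Int.le_add_one le_rfl)),
      measure_union hdisj measurableSet_Ioc, measure_union hdisj measurableSet_Ioc, ih, h]

theorem MeasureTheory.MeasurePreserving.measure_inter_preimage_eq {α : Type*} [MeasurableSpace α]
    {ν : Measure α} {f : α → α} (hf : MeasurePreserving f ν ν) {s B : Set α}
    (hs : MeasurableSet s) (hB : MeasurableSet B) (hinv : f ⁻¹' s =ᵐ[ν] s) :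
    ν (s ∩ f ⁻¹' B) = ν (s ∩ B) := by
  rw [← hf.measure_preimage (hs.inter hB).nullMeasurableSet, preimage_inter]
  exact measure_congr (hinv.symm.inter EventuallyEq.rfl)

theorem Ergodic.of_measure_eq_zero_or_one {α : Type*} [MeasurableSpace α] {ν : Measure α}
    [IsProbabilityMeasure ν] {f : α → α} (hf : MeasurePreserving f ν ν)
    (h : ∀ s, MeasurableSet s → f ⁻¹' s = s → ν s = 0 ∨ ν s = 1) : Ergodic f ν where
  toMeasurePreserving := hf
  aeconst_set s hs hinv := by
    rw [eventuallyConst_set']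
    refine (h s hs hinv).imp ae_eq_empty.2 fun h1 => ?_
    rwa [ae_eq_univ_iff_measure_eq hs.nullMeasurableSet, measure_univ]

def dyadicIoc (n : ℕ) (j : ℤ) : Set ℝ := Ioc (j / 2 ^ n) ((j + 1) / 2 ^ n)

theorem measurableSet_dyadicIoc (n : ℕ) (j : ℤ) : MeasurableSet (dyadicIoc n j) :=
  measurableSet_Ioc

theorem MeasureTheory.Measure.ext_of_dyadicIoc {ν₁ ν₂ : Measure ℝ} [IsFiniteMeasure ν₁]
    (huniv : ν₁ univ = ν₂ univ) (h : ∀ n j, ν₁ (dyadicIoc n j) = ν₂ (dyadicIoc n j)) :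
    ν₁ = ν₂ := by
  refine ext_of_generate_finite _ (BorelSpace.measurable_eq.trans
    Real.dense_range_dyadic.borel_eq_generateFrom_Ioc_mem) (isPiSystem_Ioc_mem _ _) ?_ huniv
  rintro - ⟨-, ⟨⟨n, j⟩, rfl⟩, -, ⟨⟨m, i⟩, rfl⟩, hlt, rfl⟩
  set g : ℤ → ℝ := fun k => k / 2 ^ (n + m)
  have hg : StrictMono g := fun k l hkl => by simp only [g]; gcongr
  have hl : (j : ℝ) / 2 ^ n = g (j * 2 ^ m) := by simp only [g]; push_cast; field_simp; ring
  have hu : (i : ℝ) / 2 ^ m = g (i * 2 ^ n) := by simp only [g]; push_cast; field_simp; ring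
  simp only at hlt ⊢
  rw [hl, hu] at hlt ⊢
  refine measure_Ioc_eq_of_forall_Ioc_succ hg.monotone (fun k => ?_) (hg.lt_iff_lt.1 hlt).le
  convert h (n + m) k using 2 <;> simp [g, dyadicIoc]

theorem volume_dyadicIoc (n : ℕ) (j : ℤ) : volume (dyadicIoc n j) = (2 ^ n)⁻¹ := by
  rw [dyadicIoc, Real.volume_Ioc, ← sub_div, add_sub_cancel_left, one_div,
    ENNReal.ofReal_inv_of_pos (by positivity), ENNReal.ofReal_pow zero_le_two,
    ENNReal.ofReal_ofNat]

theorem dyadicIoc_subset_Ioc {n : ℕ} {a b j : ℤ} (ha : a ≤ j) (hb : j < b) :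
    dyadicIoc n j ⊆ Ioc (a / 2 ^ n) (b / 2 ^ n) := by
  have ha' : (a : ℝ) ≤ j := by exact_mod_cast ha
  have hb' : (j : ℝ) + 1 ≤ b := by exact_mod_cast hb
  exact Ioc_subset_Ioc (by gcongr) (by gcongr)

theorem dyadicIoc_subset_Ioc_zero_one {n : ℕ} {j : ℤ} (hj₀ : 0 ≤ j) (hj : j < 2 ^ n) :
    dyadicIoc n j ⊆ Ioc 0 1 := by
  simpa using dyadicIoc_subset_Ioc (n := n) hj₀ hj

theorem dyadicIoc_succ_subset_Ioc_zero_half {n : ℕ} {j : ℤ} (hj₀ : 0 ≤ j) (hj : j < 2 ^ n) :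
    dyadicIoc (n + 1) j ⊆ Ioc 0 (1 / 2) := by
  convert dyadicIoc_subset_Ioc (n := n + 1) hj₀ hj using 2
  · simp
  · push_cast; field_simp; ring

theorem dyadicIoc_succ_subset_Ioc_half_one {n : ℕ} {j : ℤ} (hj₀ : 2 ^ n ≤ j)
    (hj : j < 2 ^ (n + 1)) : dyadicIoc (n + 1) j ⊆ Ioc (1 / 2) 1 := by
  convert dyadicIoc_subset_Ioc (n := n + 1) hj₀ hj using 2
  · push_cast; field_simp; ring
  · push_cast; field_simp

theorem disjoint_dyadicIoc_Ioc_zero_one {n : ℕ} {j : ℤ} (hj : j < 0 ∨ 2 ^ n ≤ j) :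
    Disjoint (dyadicIoc n j) (Ioc 0 1) := by
  rcases hj with hj | hj
  · have hj' : (j : ℝ) + 1 ≤ 0 := by exact_mod_cast hj
    exact Ioc_disjoint_Ioc_of_le (div_nonpos_of_nonpos_of_nonneg hj' (by positivity))
  · have hj' : (2 : ℝ) ^ n ≤ j := by exact_mod_cast hj
    exact (Ioc_disjoint_Ioc_of_le ((one_le_div (by positivity)).2 hj')).symm

theorem preimage_div_two_dyadicIoc (n : ℕ) (j : ℤ) :
    (· / 2) ⁻¹' dyadicIoc (n + 1) j = dyadicIoc n j := by
  ext x
  simp only [dyadicIoc, mem_preimage, mem_Ioc, pow_succ, ← div_div,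
    div_le_div_iff_of_pos_right (two_pos : (0 : ℝ) < 2),
    div_lt_div_iff_of_pos_right (two_pos : (0 : ℝ) < 2)]

theorem preimage_add_half_dyadicIoc (n : ℕ) (j : ℤ) :
    (· + 1 / 2) ⁻¹' dyadicIoc (n + 1) j = dyadicIoc (n + 1) (j - 2 ^ n) := by
  have h : (2 : ℝ) ^ n / 2 ^ (n + 1) = 1 / 2 := by rw [pow_succ]; field_simp
  rw [dyadicIoc, preimage_add_const_Ioc, dyadicIoc]
  push_cast
  rw [sub_add_eq_add_sub, sub_div, sub_div, h]

-- `Ioc` rather than `Icc`: the intervals `dyadicIoc n j` with `0 ≤ j < 2 ^ n` partition it exactly.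
local notation "μ" => volume.restrict (Ioc (0 : ℝ) 1)

instance : IsProbabilityMeasure μ := ⟨by simp⟩

theorem map_div_two_volume_restrict_Ioc :
    Measure.map (· / 2) μ = (2 : ℝ≥0∞) • volume.restrict (Ioc 0 (1 / 2)) := by
  have hpre : (· / 2 : ℝ → ℝ) ⁻¹' Ioc 0 (1 / 2) = Ioc 0 1 := by
    ext x
    simp only [mem_preimage, mem_Ioc]
    constructor <;> intro h <;> constructor <;> linarith [h.1, h.2]
  have hmap : volume.map (· / 2 : ℝ → ℝ) = (2 : ℝ≥0∞) • volume := by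
    simpa [div_eq_mul_inv] using Real.map_volume_mul_right (a := 2⁻¹) (by norm_num)
  rw [← hpre, ← Measure.restrict_map (by fun_prop) measurableSet_Ioc, hmap,
    Measure.restrict_smul]

theorem quasiMeasurePreserving_div_two :
    Measure.QuasiMeasurePreserving (· / 2 : ℝ → ℝ) μ μ where
  measurable := by fun_prop
  absolutelyContinuous := by
    rw [map_div_two_volume_restrict_Ioc]
    exact Measure.smul_absolutelyContinuous.trans (Measure.absolutelyContinuous_of_le
      (Measure.restrict_mono (Ioc_subset_Ioc_right (by norm_num)) le_rfl))

theorem measure_preimage_div_two {A : Set ℝ} (hA : MeasurableSet A) :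
    μ ((· / 2) ⁻¹' A) = 2 * μ (A ∩ Ioc 0 (1 / 2)) := by
  rw [← Measure.map_apply (by fun_prop) hA, map_div_two_volume_restrict_Ioc,
    Measure.smul_apply, smul_eq_mul, Measure.restrict_apply hA,
    Measure.restrict_apply (hA.inter measurableSet_Ioc), inter_assoc,
    inter_eq_left.2 (Ioc_subset_Ioc_right (by norm_num))]

def carryInterval (n : ℕ) : Set ℝ := Ioo (1 - 1 / 2 ^ n) (1 - 1 / 2 ^ (n + 1))

theorem carryInterval_zero : carryInterval 0 = Ioo 0 (1 / 2) := by
  norm_num [carryInterval]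

theorem carryInterval_subset_Ioo (n : ℕ) : carryInterval n ⊆ Ioo 0 1 :=
  Ioo_subset_Ioo
    (by rw [sub_nonneg]; exact div_le_one_of_le₀ (one_le_pow₀ one_le_two) (by positivity))
    (by simp)

theorem carryInterval_succ_subset_Ioi (n : ℕ) : carryInterval (n + 1) ⊆ Ioi (1 / 2) := by
  have h : (1 : ℝ) / 2 ^ (n + 1) ≤ 1 / 2 :=
    one_div_le_one_div_of_le two_pos (le_self_pow₀ one_le_two n.succ_ne_zero)
  exact fun x hx => show 1 / 2 < x by linarith [hx.1]

theorem ae_exists_mem_carryInterval : ∀ᵐ x ∂μ, ∃ n, x ∈ carryInterval n := by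
  have hnull : ∀ᵐ x ∂volume, x ∉ range (fun n : ℕ => 1 - 1 / (2 : ℝ) ^ n) ∪ {1} :=
    ((countable_range _).union (countable_singleton 1)).ae_notMem volume
  rw [ae_restrict_iff' measurableSet_Ioc]
  filter_upwards [hnull] with x hx ⟨hx₀, hx₁⟩
  simp only [mem_union, mem_range, mem_singleton_iff, not_or, not_exists] at hx
  have hpos : 0 < 1 - x := sub_pos.2 (lt_of_le_of_ne hx₁ hx.2)
  obtain ⟨n, hn, hn'⟩ := exists_nat_pow_near (one_le_one_div hpos (by linarith)) one_lt_two
  rw [le_div_iff₀ hpos, ← le_div_iff₀' (by positivity)] at hn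
  rw [div_lt_iff₀ hpos, ← div_lt_iff₀' (by positivity)] at hn'
  exact ⟨n, lt_of_le_of_ne (by linarith) (hx.1 n), by linarith⟩

/-- `x ∈ carryInterval n` iff the binary expansion of `x` starts with exactly `n` ones; adding `1/2`
with carry to the right turns them into zeros and the next digit into a one. -/
def IsOdometer (T : ℝ → ℝ) : Prop :=
  ∀ n, ∀ x ∈ carryInterval n, T x = x - 1 + 3 / 2 ^ (n + 1)

namespace IsOdometer

variable {T : ℝ → ℝ} (hT : IsOdometer T)
include hT

theorem apply_of_mem_Ioo {x : ℝ} (hx : x ∈ Ioo 0 (1 / 2)) : T x = x + 1 / 2 := by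
  rw [hT 0 x (carryInterval_zero ▸ hx)]
  norm_num
  ring

theorem apply_lt_half {n : ℕ} {x : ℝ} (hx : x ∈ carryInterval (n + 1)) : T x < 1 / 2 := by
  have h : (1 : ℝ) / 2 ^ (n + 1) ≤ 1 / 2 :=
    one_div_le_one_div_of_le two_pos (le_self_pow₀ one_le_two n.succ_ne_zero)
  have hx₂ := hx.2
  rw [hT _ x hx]
  rw [pow_succ 2 (n + 1)] at hx₂ ⊢
  linarith [show (3 : ℝ) / (2 ^ (n + 1) * 2) = 1 / 2 ^ (n + 1) + 1 / (2 ^ (n + 1) * 2) by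
    field_simp; norm_num]

theorem apply_add_one_div_two {n : ℕ} {x : ℝ} (hx : x ∈ carryInterval n) :
    T ((x + 1) / 2) = T x / 2 := by
  have hmem : (x + 1) / 2 ∈ carryInterval (n + 1) := by
    obtain ⟨hx₁, hx₂⟩ := hx
    constructor
    · rw [pow_succ]; linarith [show (1 : ℝ) / (2 ^ n * 2) = 1 / 2 ^ n / 2 by field_simp]
    · rw [pow_succ 2 (n + 1)]
      linarith [show (1 : ℝ) / (2 ^ (n + 1) * 2) = 1 / 2 ^ (n + 1) / 2 by field_simp]
  rw [hT _ _ hmem, hT _ _ hx, pow_succ 2 (n + 1)]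
  field_simp
  ring

theorem preimage_ae_eq_preimage_add_half {B : Set ℝ} (hB : B ⊆ Ioc (1 / 2) 1) :
    T ⁻¹' B =ᵐ[μ] (· + 1 / 2) ⁻¹' B := by
  refine eventuallyEq_set.2 ?_
  filter_upwards [ae_exists_mem_carryInterval] with x ⟨n, hx⟩
  cases n with
  | zero =>
    rw [carryInterval_zero] at hx
    rw [mem_preimage, mem_preimage, hT.apply_of_mem_Ioo hx]
  | succ n =>
    have hTx := hT.apply_lt_half hx
    have hx' : 1 / 2 < x := carryInterval_succ_subset_Ioi n hx
    exact iff_of_false (fun h => (hB h).1.not_gt hTx)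
      (fun h => (hB h).2.not_gt (by linarith))

theorem ae_apply_apply_div_two : ∀ᵐ x ∂μ, T (T (x / 2)) = T x / 2 := by
  filter_upwards [ae_exists_mem_carryInterval] with x ⟨n, hx⟩
  obtain ⟨hx₀, hx₁⟩ := carryInterval_subset_Ioo n hx
  rw [hT.apply_of_mem_Ioo (x := x / 2) ⟨by linarith, by linarith⟩,
    ← hT.apply_add_one_div_two hx, add_div]

variable (hmp : MeasurePreserving T μ μ)
include hmp

theorem measure_inter_eq_measure_inter_preimage_add_half {s B : Set ℝ} (hs : MeasurableSet s)
    (hinv : T ⁻¹' s =ᵐ[μ] s) (hBm : MeasurableSet B) (hB : B ⊆ Ioc (1 / 2) 1) :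
    μ (s ∩ B) = μ (s ∩ (· + 1 / 2) ⁻¹' B) := by
  rw [← hmp.measure_inter_preimage_eq hs hBm hinv]
  exact measure_congr (EventuallyEq.rfl.inter (hT.preimage_ae_eq_preimage_add_half hB))

theorem two_mul_measure_inter_Ioc_zero_half {s : Set ℝ} (hs : MeasurableSet s)
    (hinv : T ⁻¹' s =ᵐ[μ] s) : 2 * μ (s ∩ Ioc 0 (1 / 2)) = μ s := by
  have hshift := hT.measure_inter_eq_measure_inter_preimage_add_half hmp hs hinv
    measurableSet_Ioc subset_rfl
  rw [preimage_add_const_Ioc, sub_self, show (1 : ℝ) - 1 / 2 = 1 / 2 by norm_num] at hshift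
  have hsplit : μ s = μ (s ∩ Ioc 0 (1 / 2)) + μ (s ∩ Ioc (1 / 2) 1) := by
    rw [← measure_union ((Ioc_disjoint_Ioc_of_le le_rfl).mono inter_subset_right
        inter_subset_right) (hs.inter measurableSet_Ioc), ← inter_union_distrib_left,
      Ioc_union_Ioc_eq_Ioc (by norm_num) (by norm_num),
      Measure.restrict_apply (hs.inter measurableSet_Ioc), inter_assoc, inter_self,
      Measure.restrict_apply hs]
  rw [hsplit, hshift, two_mul]

theorem preimage_preimage_div_two_ae_eq {s : Set ℝ} (hinv : T ⁻¹' s =ᵐ[μ] s) :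
    T ⁻¹' ((· / 2) ⁻¹' s) =ᵐ[μ] (· / 2) ⁻¹' s := by
  have hinv₂ : T ⁻¹' (T ⁻¹' s) =ᵐ[μ] s :=
    (hmp.quasiMeasurePreserving.preimage_ae_eq hinv).trans hinv
  refine EventuallyEq.trans ?_ (quasiMeasurePreserving_div_two.preimage_ae_eq hinv₂)
  filter_upwards [hT.ae_apply_apply_div_two] with x hx
  change (T x / 2 ∈ s) = (T (T (x / 2)) ∈ s)
  rw [hx]

theorem two_pow_mul_measure_inter_dyadicIoc (n : ℕ) {s : Set ℝ} (hs : MeasurableSet s)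
    (hinv : T ⁻¹' s =ᵐ[μ] s) {j : ℤ} (hj₀ : 0 ≤ j) (hj : j < 2 ^ n) :
    2 ^ n * μ (s ∩ dyadicIoc n j) = μ s := by
  induction n generalizing s j with
  | zero =>
    obtain rfl : j = 0 := by omega
    norm_num [dyadicIoc, Measure.restrict_apply hs,
      Measure.restrict_apply (hs.inter measurableSet_Ioc), inter_assoc]
  | succ n ih =>
    have hleft : ∀ {j : ℤ}, 0 ≤ j → j < 2 ^ n →
        2 ^ (n + 1) * μ (s ∩ dyadicIoc (n + 1) j) = μ s := by
      intro j hj₀ hj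
      calc 2 ^ (n + 1) * μ (s ∩ dyadicIoc (n + 1) j)
          = 2 ^ n * μ ((· / 2) ⁻¹' s ∩ dyadicIoc n j) := by
            rw [← preimage_div_two_dyadicIoc n j, ← preimage_inter,
              measure_preimage_div_two (hs.inter (measurableSet_dyadicIoc _ _)), inter_assoc,
              inter_eq_left.2 (dyadicIoc_succ_subset_Ioc_zero_half hj₀ hj), pow_succ, mul_assoc]
        _ = μ ((· / 2) ⁻¹' s) :=
            ih (hs.preimage (by fun_prop)) (hT.preimage_preimage_div_two_ae_eq hmp hinv) hj₀ hj
        _ = μ s := by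
            rw [measure_preimage_div_two hs, hT.two_mul_measure_inter_Ioc_zero_half hmp hs hinv]
    rcases lt_or_ge j (2 ^ n) with hlt | hge
    · exact hleft hj₀ hlt
    · rw [hT.measure_inter_eq_measure_inter_preimage_add_half hmp hs hinv
        (measurableSet_dyadicIoc _ _)
        (dyadicIoc_succ_subset_Ioc_half_one hge hj), preimage_add_half_dyadicIoc]
      exact hleft (by omega) (by rw [pow_succ] at hj; omega)

theorem restrict_eq_smul {s : Set ℝ} (hs : MeasurableSet s) (hinv : T ⁻¹' s =ᵐ[μ] s) :
    Measure.restrict μ s = μ s • μ := by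
  refine Measure.ext_of_dyadicIoc (by simp) fun n j => ?_
  rw [Measure.restrict_apply (measurableSet_dyadicIoc n j), Measure.smul_apply, smul_eq_mul,
    inter_comm]
  by_cases hj : 0 ≤ j ∧ j < 2 ^ n
  · rw [← hT.two_pow_mul_measure_inter_dyadicIoc hmp n hs hinv hj.1 hj.2,
      Measure.restrict_apply (measurableSet_dyadicIoc n j),
      inter_eq_left.2 (dyadicIoc_subset_Ioc_zero_one hj.1 hj.2), volume_dyadicIoc, mul_comm,
      ← mul_assoc, ENNReal.inv_mul_cancel (by positivity) (by simp), one_mul]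
  · have hμ : μ (dyadicIoc n j) = 0 := by
      rw [Measure.restrict_apply (measurableSet_dyadicIoc n j),
        (disjoint_dyadicIoc_Ioc_zero_one (by omega)).inter_eq, measure_empty]
    rw [hμ, mul_zero]
    exact measure_mono_null inter_subset_right hμ

theorem measure_eq_zero_or_one {s : Set ℝ} (hs : MeasurableSet s) (hinv : T ⁻¹' s =ᵐ[μ] s) :
    μ s = 0 ∨ μ s = 1 := by
  have h := congr_arg (fun ν : Measure ℝ => ν s) (hT.restrict_eq_smul hmp hs hinv)
  simp only [Measure.restrict_apply_self, Measure.smul_apply, smul_eq_mul] at h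
  exact ProbabilityTheory.measure_eq_zero_or_one_of_indepSet_self
    ((ProbabilityTheory.indepSet_iff_measure_inter_eq_mul hs hs μ).2 (by rwa [inter_self]))

end IsOdometer

theorem odometer_ergodic_general (φ₁ φ₂ : ℝ → ℝ)
    (h1 : ∀ x, φ₁ x = 1 - x)
    (h2 : ∀ n : ℕ, ∀ x ∈ Set.Ioo ((1 : ℝ) / 2 ^ (n + 1)) (1 / 2 ^ n),
      φ₂ x = 3 / 2 ^ (n + 1) - x)
    (hmp : MeasurePreserving φ₂ (volume.restrict (Set.Icc (0 : ℝ) 1))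
      (volume.restrict (Set.Icc (0 : ℝ) 1))) :
    Ergodic (φ₂ ∘ φ₁) (volume.restrict (Set.Icc (0 : ℝ) 1)) := by
  have hmp₁ : MeasurePreserving φ₁ (volume.restrict (Icc (0 : ℝ) 1))
      (volume.restrict (Icc 0 1)) := by
    have h := (Measure.measurePreserving_sub_left volume (1 : ℝ)).restrict_preimage
      (measurableSet_Icc (a := (0 : ℝ)) (b := 1))
    rwa [preimage_const_sub_Icc, sub_zero, sub_self, ← funext h1] at h
  have hT : IsOdometer (φ₂ ∘ φ₁) := fun n x hx => by
    rw [Function.comp_apply, h1, h2 n _ ⟨by linarith [hx.2], by linarith [hx.1]⟩]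
    ring
  rw [Measure.restrict_congr_set Ioc_ae_eq_Icc.symm] at hmp hmp₁ ⊢
  have hmpT := hmp.comp hmp₁
  exact Ergodic.of_measure_eq_zero_or_one hmpT fun s hs hinv =>
    hT.measure_eq_zero_or_one hmpT hs (EventuallyEq.of_eq hinv)

/-- with `φ₁ x = 1 - x` on `[0,1]` and `φ₂ x = 3/2^(n+1) - x` on each dyadic
interval `(1/2^(n+1), 1/2^n)`, the composition `φ₂ ∘ φ₁` (the binary odometer) is ergodic
with respect to Lebesgue measure on `[0,1]`. -/
theorem odometer_ergodic (φ₁ φ₂ : ℝ → ℝ)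
    (h1 : ∀ x, φ₁ x = 1 - x)
    (h2 : ∀ n : ℕ, ∀ x ∈ Set.Ioo ((1 : ℝ) / 2 ^ (n + 1)) (1 / 2 ^ n),
      φ₂ x = 3 / 2 ^ (n + 1) - x)
    (hm : Measurable φ₂)
    (hmp : MeasurePreserving φ₂ (volume.restrict (Set.Icc (0 : ℝ) 1))
      (volume.restrict (Set.Icc (0 : ℝ) 1))) :
    Ergodic (φ₂ ∘ φ₁) (volume.restrict (Set.Icc (0 : ℝ) 1)) :=
  odometer_ergodic_general φ₁ φ₂ h1 h2 hmp
end

section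
/- With φ_1(x) = 1 − x and φ_2(x) = 3/2^{n+1} − x on (1/2^{n+1}, 1/2^n), let L = graph(φ_1) ∪ graph(φ_2) ⊆ [0,1]². Then there is no measure-preserving automorphism θ of ([0,1], Lebesgue) such that L = graph(θ) ∪ graph(θ^{-1}) up to null sets. -/
open MeasureTheory Set

namespace Forest6
open Filter


lemma aeR {Q : ℝ → Prop} (c : ℝ) (h : ∀ᵐ x ∂(volume : Measure ℝ), Q x) :
    ∀ᵐ x ∂(volume : Measure ℝ), Q (c - x) :=
  (Measure.measurePreserving_sub_left volume c).quasiMeasurePreserving.ae h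

lemma aeT {Q : ℝ → Prop} (c : ℝ) (h : ∀ᵐ x ∂(volume : Measure ℝ), Q x) :
    ∀ᵐ x ∂(volume : Measure ℝ), Q (x + c) :=
  (measurePreserving_add_right volume c).quasiMeasurePreserving.ae h

lemma half {A : Set ℝ} (hA : MeasurableSet A) {a b : ℝ} (hab : a ≤ b)
    (h : ∀ᵐ x ∂(volume : Measure ℝ), x ∈ Ioo a b → (x ∈ A ↔ (a + b - x) ∉ A)) :
    volume (A ∩ Ioo a b) = ENNReal.ofReal ((b - a) / 2) := by
  have hpre : (fun x => a + b - x) ⁻¹' (A ∩ Ioo a b) =ᵐ[volume] (Ioo a b \ A : Set ℝ) := by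
    rw [Filter.eventuallyEq_set]
    filter_upwards [h] with x hx
    simp only [mem_preimage, mem_inter_iff, mem_diff, mem_Ioo]
    have hmem : (a < a + b - x ∧ a + b - x < b) ↔ (a < x ∧ x < b) := by
      constructor <;> rintro ⟨u, v⟩ <;> constructor <;> linarith
    rw [hmem]
    by_cases hxm : x ∈ Ioo a b
    · have := hx hxm
      simp only [mem_Ioo] at hxm
      tauto
    · simp only [mem_Ioo] at hxm
      tauto
  have h1 : volume ((fun x => a + b - x) ⁻¹' (A ∩ Ioo a b)) = volume (A ∩ Ioo a b) :=
    (Measure.measurePreserving_sub_left volume (a + b)).measure_preimage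
      (hA.inter measurableSet_Ioo).nullMeasurableSet
  have h2 : volume (Ioo a b ∩ A) + volume (Ioo a b \ A) = volume (Ioo a b) :=
    measure_inter_add_diff _ hA
  have h3 : volume (A ∩ Ioo a b) = volume (Ioo a b \ A) := by
    rw [← h1, measure_congr hpre]
  rw [inter_comm] at h3
  rw [← h3] at h2
  have hfin : volume (Ioo a b ∩ A) ≠ ⊤ :=
    (lt_of_le_of_lt (measure_mono inter_subset_left) measure_Ioo_lt_top).ne
  rw [Real.volume_Ioo] at h2
  rw [inter_comm]
  have htr := ENNReal.toReal_add hfin hfin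
  have h4 : (volume (Ioo a b ∩ A)).toReal = (b - a) / 2 := by
    have h5 := congrArg ENNReal.toReal h2
    rw [htr, ENNReal.toReal_ofReal (by linarith)] at h5
    linarith
  rw [← h4, ENNReal.ofReal_toReal hfin]

lemma transl {A : Set ℝ} (hA : MeasurableSet A) {a b c : ℝ}
    (h : ∀ᵐ x ∂(volume : Measure ℝ), x ∈ Ioo a b → (x ∈ A ↔ x + c ∈ A)) :
    volume (A ∩ Ioo (a + c) (b + c)) = volume (A ∩ Ioo a b) := by
  have hpre : (fun x => x + c) ⁻¹' (A ∩ Ioo (a + c) (b + c)) =ᵐ[volume] (A ∩ Ioo a b : Set ℝ) := by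
    rw [Filter.eventuallyEq_set]
    filter_upwards [h] with x hx
    simp only [mem_preimage, mem_inter_iff, mem_Ioo]
    have hmem : (a + c < x + c ∧ x + c < b + c) ↔ (a < x ∧ x < b) := by
      constructor <;> rintro ⟨u, v⟩ <;> constructor <;> linarith
    rw [hmem]
    by_cases hxm : x ∈ Ioo a b
    · have := hx hxm
      simp only [mem_Ioo] at hxm
      tauto
    · simp only [mem_Ioo] at hxm
      tauto
  rw [← (measurePreserving_add_right volume c).measure_preimage
      (hA.inter measurableSet_Ioo).nullMeasurableSet, measure_congr hpre]

set_option maxHeartbeats 1000000 in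
lemma noA {A : Set ℝ} (hA : MeasurableSet A)
    (H1 : ∀ᵐ x ∂(volume : Measure ℝ), x ∈ Ioo (0:ℝ) 1 → (x ∈ A ↔ (1 - x) ∉ A))
    (H2 : ∀ n : ℕ, ∀ᵐ x ∂(volume : Measure ℝ),
      x ∈ Ioo ((1:ℝ)/2^(n+1)) (1/2^n) → (x ∈ A ↔ (3/2^(n+1) - x) ∉ A)) : False := by
  -- reflections of the dyadic tails (0, 1/2^j)
  have R : ∀ j : ℕ, ∀ᵐ x ∂(volume : Measure ℝ),
      x ∈ Ioo (0:ℝ) (1/2^j) → (x ∈ A ↔ ((1:ℝ)/2^j - x) ∉ A) := by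
    intro j
    induction j with
    | zero => simpa using H1
    | succ j ih =>
      filter_upwards [ih, aeR ((1:ℝ)/2^j) (H2 j), aeT ((1:ℝ)/2^(j+1)) ih] with x hx hstep htr hxm
      obtain ⟨hx0, hx1⟩ := hxm
      have hp : (0:ℝ) < 2^j := by positivity
      have he : (2:ℝ)^(j+1) = 2^j * 2 := pow_succ 2 j
      have hlt : (1:ℝ)/2^(j+1) < 1/2^j := by
        rw [he, div_lt_div_iff₀ (by positivity) hp]; nlinarith
      have i1 := hx ⟨hx0, lt_trans hx1 hlt⟩
      have e4 : (1:ℝ)/2^j - 1/2^(j+1) = 1/2^(j+1) := by rw [he]; field_simp; ring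
      have m2 : (1:ℝ)/2^j - x ∈ Ioo ((1:ℝ)/2^(j+1)) ((1:ℝ)/2^j) := by
        constructor
        · linarith
        · linarith
      have i2 := hstep m2
      have e2 : (3:ℝ)/2^(j+1) - ((1:ℝ)/2^j - x) = x + 1/2^(j+1) := by
        rw [he]; field_simp; ring
      rw [e2] at i2
      have m3 : x + (1:ℝ)/2^(j+1) ∈ Ioo (0:ℝ) ((1:ℝ)/2^j) := by
        constructor
        · positivity
        · linarith
      have i3 := htr m3
      have e3 : (1:ℝ)/2^j - (x + 1/2^(j+1)) = 1/2^(j+1) - x := by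
        rw [he]; field_simp; ring
      rw [e3] at i3
      tauto
  -- translations by 1/2^(j+1) within (0, 1/2^j)
  have Tr : ∀ j : ℕ, ∀ᵐ x ∂(volume : Measure ℝ),
      x ∈ Ioo (0:ℝ) ((1:ℝ)/2^(j+1)) → (x ∈ A ↔ x + 1/2^(j+1) ∈ A) := by
    intro j
    filter_upwards [R j, aeR ((1:ℝ)/2^j) (H2 j)] with x hx hstep hxm
    obtain ⟨hx0, hx1⟩ := hxm
    have hp : (0:ℝ) < 2^j := by positivity
    have hp1 : (0:ℝ) < 2^(j+1) := by positivity
    have he : (2:ℝ)^(j+1) = 2^j * 2 := pow_succ 2 j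
    have hlt : (1:ℝ)/2^(j+1) < 1/2^j := by
      rw [he, div_lt_div_iff₀ (by positivity) hp]; nlinarith
    have i1 := hx ⟨hx0, lt_trans hx1 hlt⟩
    have m2 : (1:ℝ)/2^j - x ∈ Ioo ((1:ℝ)/2^(j+1)) ((1:ℝ)/2^j) := by
      constructor
      · have e4 : (1:ℝ)/2^j - 1/2^(j+1) = 1/2^(j+1) := by rw [he]; field_simp; ring
        linarith
      · linarith
    have i2 := hstep m2
    have e2 : (3:ℝ)/2^(j+1) - ((1:ℝ)/2^j - x) = x + 1/2^(j+1) := by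
      rw [he]; field_simp; ring
    rw [e2] at i2
    tauto
  -- measures of all dyadic intervals
  have M : ∀ k j m : ℕ, m < 2^k →
      volume (A ∩ Ioo ((m:ℝ)/2^(j+k)) (((m:ℝ)+1)/2^(j+k))) = ENNReal.ofReal ((1/2^(j+k))/2) := by
    intro k
    induction k with
    | zero =>
      intro j m hm
      have hm0 : m = 0 := by omega
      subst hm0
      simp only [Nat.add_zero, Nat.cast_zero, zero_div, zero_add]
      have hh := half hA (a := (0:ℝ)) (b := (1:ℝ)/2^j) (by positivity) ?_
      · convert hh using 2 <;> norm_num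
      · filter_upwards [R j] with x hx hxm
        rw [zero_add]
        exact hx hxm
    | succ k ih =>
      intro j m hm
      have hje : (j+1)+k = j+(k+1) := by omega
      by_cases hm' : m < 2^k
      · have := ih (j+1) m hm'
        rw [hje] at this
        exact this
      · have hm2 : m = (m - 2^k) + 2^k := by omega
        set m' := m - 2^k with hm'def
        have hm'lt : m' < 2^k := by omega
        have hkey := transl hA (a := (m':ℝ)/2^(j+(k+1))) (b := ((m':ℝ)+1)/2^(j+(k+1)))
          (c := (1:ℝ)/2^(j+1)) ?_
        · have hsplit : (2:ℝ)^(j+(k+1)) = 2^(j+1) * 2^k := by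
            rw [← pow_add]; congr 1; omega
          have hpk : (0:ℝ) < 2^k := by positivity
          have hpj : (0:ℝ) < 2^(j+1) := by positivity
          have ea : (m':ℝ)/2^(j+(k+1)) + 1/2^(j+1) = (m:ℝ)/2^(j+(k+1)) := by
            rw [hm2]; push_cast; rw [hsplit]; field_simp
          have eb : ((m':ℝ)+1)/2^(j+(k+1)) + 1/2^(j+1) = ((m:ℝ)+1)/2^(j+(k+1)) := by
            rw [hm2]; push_cast; rw [hsplit]; field_simp; ring
          rw [ea, eb] at hkey
          rw [hkey]
          have := ih (j+1) m' hm'lt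
          rw [hje] at this
          exact this
        · filter_upwards [Tr j] with x hx hxm
          apply hx
          obtain ⟨hx0, hx1⟩ := hxm
          have hsplit : (2:ℝ)^(j+(k+1)) = 2^(j+1) * 2^k := by
            rw [← pow_add]; congr 1; omega
          have hpk : (0:ℝ) < 2^k := by positivity
          have hpj : (0:ℝ) < 2^(j+1) := by positivity
          constructor
          · have : (0:ℝ) ≤ (m':ℝ)/2^(j+(k+1)) := by positivity
            linarith
          · have hble : ((m':ℝ)+1)/2^(j+(k+1)) ≤ 1/2^(j+1) := by
              rw [hsplit, div_le_div_iff₀ (by positivity) hpj]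
              have hle9 : ((m':ℝ)+1) ≤ 2^k := by exact_mod_cast Nat.succ_le_of_lt hm'lt
              nlinarith
            linarith
  -- consecutive dyadic cells
  have C : ∀ d p k : ℕ, p + d ≤ 2^k →
      volume (A ∩ Ioo ((p:ℝ)/2^k) (((p:ℝ)+(d:ℝ))/2^k)) = ENNReal.ofReal ((d:ℝ)/2^k/2) := by
    intro d
    induction d with
    | zero =>
      intro p k h
      simp [Ioo_self]
    | succ d ih =>
      intro p k h
      have hu1 := ih p k (by omega)
      have hu2 := M k 0 (p+d) (by omega)
      simp only [Nat.zero_add] at hu2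
      push_cast at hu2 ⊢
      have hpk : (0:ℝ) < 2^k := by positivity
      set a := (p:ℝ)/2^k with hadef
      set t := ((p:ℝ)+(d:ℝ))/2^k with htdef
      set b := ((p:ℝ)+((d:ℝ)+1))/2^k with hbdef
      have hat : a ≤ t := by
        rw [hadef, htdef, div_le_div_iff₀ hpk hpk]
        have : (0:ℝ) ≤ (d:ℝ) := Nat.cast_nonneg d
        nlinarith
      have htb : t < b := by
        rw [htdef, hbdef, div_lt_div_iff₀ hpk hpk]
        nlinarith
      have heb : ((p:ℝ)+(d:ℝ)+1)/2^k = b := by rw [hbdef]; ring_nf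
      rw [heb] at hu2
      have hsub : A ∩ Ioo a b ⊆ ((A ∩ Ioo a t) ∪ (A ∩ Ioo t b)) ∪ {t} := by
        rintro x ⟨hxA, hx1, hx2⟩
        rcases lt_trichotomy x t with hlt | heq | hgt
        · exact Or.inl (Or.inl ⟨hxA, hx1, hlt⟩)
        · exact Or.inr heq
        · exact Or.inl (Or.inr ⟨hxA, hgt, hx2⟩)
      have hsub2 : (A ∩ Ioo a t) ∪ (A ∩ Ioo t b) ⊆ A ∩ Ioo a b := by
        rintro x (⟨hxA, hx1, hx2⟩ | ⟨hxA, hx1, hx2⟩)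
        · exact ⟨hxA, hx1, lt_trans hx2 htb⟩
        · exact ⟨hxA, lt_of_le_of_lt hat hx1, hx2⟩
      have hdisj : Disjoint (A ∩ Ioo a t) (A ∩ Ioo t b) := by
        rw [Set.disjoint_left]
        rintro x ⟨_, _, hx2⟩ ⟨_, hx3, _⟩
        exact absurd (lt_trans hx2 hx3) (lt_irrefl x)
      have hle : volume (A ∩ Ioo a b) ≤ volume (A ∩ Ioo a t) + volume (A ∩ Ioo t b) := by
        calc volume (A ∩ Ioo a b) ≤ volume (((A ∩ Ioo a t) ∪ (A ∩ Ioo t b)) ∪ {t}) :=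
              measure_mono hsub
          _ ≤ volume ((A ∩ Ioo a t) ∪ (A ∩ Ioo t b)) + volume ({t} : Set ℝ) := measure_union_le _ _
          _ = volume ((A ∩ Ioo a t) ∪ (A ∩ Ioo t b)) := by
              rw [Real.volume_singleton, add_zero]
          _ ≤ volume (A ∩ Ioo a t) + volume (A ∩ Ioo t b) := measure_union_le _ _
      have hge : volume (A ∩ Ioo a t) + volume (A ∩ Ioo t b) ≤ volume (A ∩ Ioo a b) := by
        rw [← measure_union hdisj (hA.inter measurableSet_Ioo)]
        exact measure_mono hsub2
      have heq : volume (A ∩ Ioo a b) = volume (A ∩ Ioo a t) + volume (A ∩ Ioo t b) :=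
        le_antisymm hle hge
      rw [heq, hu1, hu2, ← ENNReal.ofReal_add (by positivity) (by positivity)]
      congr 1
      ring
  -- general subintervals of [0,1]
  have hhalfpow : Tendsto (fun k : ℕ => (1:ℝ)/2^k) atTop (nhds 0) := by
    have h := tendsto_pow_atTop_nhds_zero_of_lt_one (by norm_num : (0:ℝ) ≤ 1/2) (by norm_num)
    convert h using 2 with k
    rw [div_pow, one_pow]
  have G : ∀ a b : ℝ, 0 ≤ a → a ≤ b → b ≤ 1 →
      volume (A ∩ Ioo a b) = ENNReal.ofReal ((b - a)/2) := by
    intro a b ha hab hb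
    rcases eq_or_lt_of_le hab with rfl | hlt
    · simp [Ioo_self]
    have hb0 : 0 < b := lt_of_le_of_lt ha hlt
    set aseq : ℕ → ℝ := fun k => ((Nat.floor (a*2^k) : ℝ) + 1)/2^k with haseq
    set bseq : ℕ → ℝ := fun k => (Nat.floor (b*2^k) : ℝ)/2^k with hbseq
    have hpk : ∀ k : ℕ, (0:ℝ) < 2^k := fun k => by positivity
    have f1 : ∀ k, a < aseq k := by
      intro k
      rw [haseq, lt_div_iff₀ (hpk k)]
      have := Nat.lt_floor_add_one (a*2^k)
      linarith
    have f2 : ∀ k, aseq k ≤ a + 1/2^k := by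
      intro k
      rw [haseq, div_le_iff₀ (hpk k)]
      have := Nat.floor_le (by positivity : (0:ℝ) ≤ a*2^k)
      have h2 : (a + 1/2^k)*2^k = a*2^k + 1 := by field_simp
      rw [h2]; linarith
    have f3 : ∀ k, bseq k ≤ b := by
      intro k
      rw [hbseq, div_le_iff₀ (hpk k)]
      exact Nat.floor_le (by positivity : (0:ℝ) ≤ b*2^k)
    have f4 : ∀ k, b - 1/2^k < bseq k := by
      intro k
      rw [hbseq, lt_div_iff₀ (hpk k)]
      have h1 := Nat.sub_one_lt_floor (b*2^k)
      have h2 : (b - 1/2^k)*2^k = b*2^k - 1 := by field_simp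
      rw [h2]; linarith
    have f5 : ∀ k, 0 ≤ aseq k := by
      intro k; rw [haseq]; positivity
    have amono : ∀ k, aseq (k+1) ≤ aseq k := by
      intro k
      have hfl : Nat.floor (a*2^(k+1)) + 1 ≤ 2*(Nat.floor (a*2^k) + 1) := by
        have h1 : a*2^(k+1) < 2*(Nat.floor (a*2^k)) + 2 := by
          have := Nat.lt_floor_add_one (a*2^k)
          have he : a*2^(k+1) = 2*(a*2^k) := by rw [pow_succ]; ring
          rw [he]; linarith
        have h2 : Nat.floor (a*2^(k+1)) < 2*(Nat.floor (a*2^k)) + 2 := by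
          rcases le_or_gt (a*2^(k+1)) 0 with hle | hpos
          · have h0 : Nat.floor (a*2^(k+1)) = 0 :=
              Nat.floor_eq_zero.2 (lt_of_le_of_lt hle one_pos)
            omega
          · apply (Nat.floor_lt (le_of_lt hpos)).2
            push_cast
            linarith
        omega
      rw [haseq]
      simp only
      rw [div_le_div_iff₀ (hpk (k+1)) (hpk k)]
      have hc : ((Nat.floor (a*2^(k+1)) : ℝ) + 1) ≤ 2*((Nat.floor (a*2^k) : ℝ) + 1) := by
        exact_mod_cast hfl
      have he : (2:ℝ)^(k+1) = 2^k*2 := pow_succ 2 k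
      nlinarith [hpk k]
    have bmono : ∀ k, bseq k ≤ bseq (k+1) := by
      intro k
      have hfl : 2*(Nat.floor (b*2^k)) ≤ Nat.floor (b*2^(k+1)) := by
        apply Nat.le_floor
        have := Nat.floor_le (by positivity : (0:ℝ) ≤ b*2^k)
        have he : b*2^(k+1) = 2*(b*2^k) := by rw [pow_succ]; ring
        push_cast
        rw [he]; linarith
      rw [hbseq]
      simp only
      rw [div_le_div_iff₀ (hpk k) (hpk (k+1))]
      have hc : 2*((Nat.floor (b*2^k) : ℝ)) ≤ (Nat.floor (b*2^(k+1)) : ℝ) := by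
        exact_mod_cast hfl
      have he : (2:ℝ)^(k+1) = 2^k*2 := pow_succ 2 k
      have hnn : (0:ℝ) ≤ (Nat.floor (b*2^k) : ℝ) := Nat.cast_nonneg _
      nlinarith [hpk k, hnn]
    set S : ℕ → Set ℝ := fun k => A ∩ Ioo (aseq k) (bseq k) with hS
    have hmono : Monotone S := by
      apply monotone_nat_of_le_succ
      intro k
      apply inter_subset_inter_right
      intro x hx
      exact ⟨lt_of_le_of_lt (amono k) hx.1, lt_of_lt_of_le hx.2 (bmono k)⟩
    have hunion : ⋃ k, S k = A ∩ Ioo a b := by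
      ext x
      simp only [mem_iUnion, hS, mem_inter_iff, mem_Ioo]
      constructor
      · rintro ⟨k, hxA, hx1, hx2⟩
        exact ⟨hxA, lt_trans (f1 k) hx1, lt_of_lt_of_le hx2 (f3 k)⟩
      · rintro ⟨hxA, hx1, hx2⟩
        obtain ⟨k, hk⟩ : ∃ k : ℕ, (1:ℝ)/2^k < min (x - a) (b - x) := by
          obtain ⟨k, hk⟩ := exists_pow_lt_of_lt_one
            (by simp only [lt_min_iff]; constructor <;> linarith :
              (0:ℝ) < min (x - a) (b - x)) (by norm_num : (1:ℝ)/2 < 1)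
          exact ⟨k, by rw [div_pow, one_pow] at hk; exact hk⟩
        rw [lt_min_iff] at hk
        refine ⟨k, hxA, ?_, ?_⟩
        · have := f2 k; linarith [hk.1]
        · have := f4 k; linarith [hk.2]
    have htend : Tendsto (fun k => volume (S k)) atTop (nhds (volume (A ∩ Ioo a b))) := by
      rw [← hunion]
      exact tendsto_measure_iUnion_atTop hmono
    have hval : ∀ᶠ k in atTop, volume (S k) = ENNReal.ofReal ((bseq k - aseq k)/2) := by
      have hev : ∀ᶠ k in atTop, (1:ℝ)/2^k < (b - a)/2 := by
        have := hhalfpow.eventually_lt_const (by linarith : (0:ℝ) < (b - a)/2)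
        exact this
      filter_upwards [hev] with k hk
      have hab' : aseq k < bseq k := by
        have := f2 k; have := f4 k; linarith
      set p := Nat.floor (a*2^k) + 1 with hp
      set q := Nat.floor (b*2^k) with hq
      have hpq : p ≤ q := by
        have : (p:ℝ)/2^k < (q:ℝ)/2^k := by
          rw [hp, hq]; push_cast; exact hab'
        have := (div_lt_div_iff₀ (hpk k) (hpk k)).1 this
        have : (p:ℝ) < (q:ℝ) := by nlinarith [hpk k]
        exact_mod_cast le_of_lt this
      have hq2 : q ≤ 2^k := by
        rw [hq]
        have : b*2^k ≤ ((2^k : ℕ) : ℝ) := by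
          push_cast; nlinarith [hpk k]
        calc Nat.floor (b*2^k) ≤ Nat.floor (((2^k : ℕ) : ℝ)) := Nat.floor_mono this
          _ = 2^k := Nat.floor_natCast _
      have hC := C (q - p) p k (by omega)
      have hcast : (p:ℝ) + ((q - p : ℕ) : ℝ) = (q:ℝ) := by
        have : ((q - p : ℕ) : ℝ) = (q:ℝ) - (p:ℝ) := by
          push_cast [Nat.cast_sub hpq]; ring
        rw [this]; ring
      rw [hcast] at hC
      have heps : aseq k = (p:ℝ)/2^k := by rw [haseq, hp]; push_cast; ring_nf
      have heqb : bseq k = (q:ℝ)/2^k := by rw [hbseq, hq]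
      rw [hS]
      simp only
      rw [heps, heqb, hC]
      congr 1
      have : ((q - p : ℕ) : ℝ) = (q:ℝ) - (p:ℝ) := by
        push_cast [Nat.cast_sub hpq]; ring
      rw [this]
      field_simp
    have haconv : Tendsto aseq atTop (nhds a) := by
      have h1 : Tendsto (fun k : ℕ => a + 1/2^k) atTop (nhds a) := by
        have := (tendsto_const_nhds : Tendsto (fun _ : ℕ => a) atTop (nhds a)).add hhalfpow
        simpa using this
      exact tendsto_of_tendsto_of_tendsto_of_le_of_le tendsto_const_nhds h1
        (fun k => le_of_lt (f1 k)) f2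
    have hbconv : Tendsto bseq atTop (nhds b) := by
      have h1 : Tendsto (fun k : ℕ => b - 1/2^k) atTop (nhds b) := by
        have := (tendsto_const_nhds : Tendsto (fun _ : ℕ => b) atTop (nhds b)).sub hhalfpow
        simpa using this
      exact tendsto_of_tendsto_of_tendsto_of_le_of_le h1 tendsto_const_nhds
        (fun k => le_of_lt (f4 k)) f3
    have hlim2 : Tendsto (fun k => ENNReal.ofReal ((bseq k - aseq k)/2)) atTop
        (nhds (ENNReal.ofReal ((b - a)/2))) := by
      apply (ENNReal.continuous_ofReal.tendsto _).comp
      exact (hbconv.sub haconv).div_const 2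
    have htend2 : Tendsto (fun k => volume (S k)) atTop (nhds (ENNReal.ofReal ((b - a)/2))) :=
      hlim2.congr' (by filter_upwards [hval] with k hk; exact hk.symm)
    exact tendsto_nhds_unique htend htend2
  -- endgame: the two measures agree on all rational intervals
  set A' : Set ℝ := A ∩ Ioo 0 1 with hA'def
  have hA' : MeasurableSet A' := hA.inter measurableSet_Ioo
  have hvolA' : volume A' = ENNReal.ofReal (1/2) := by
    rw [hA'def]
    have := G 0 1 le_rfl zero_le_one le_rfl
    simpa using this
  set ν₁ : Measure ℝ := volume.restrict A' with hν₁
  set ν₂ : Measure ℝ := (2⁻¹ : ENNReal) • volume.restrict (Ioo (0:ℝ) 1) with hν₂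
  have hfin : IsFiniteMeasure ν₁ := by
    constructor
    rw [hν₁, Measure.restrict_apply_univ, hvolA']
    exact ENNReal.ofReal_lt_top
  have hkey : ∀ qa qb : ℚ, ν₁ (Ioo (qa:ℝ) qb) = ν₂ (Ioo (qa:ℝ) qb) := by
    intro qa qb
    set a0 := max (qa:ℝ) 0 with ha0
    set b0 := min (qb:ℝ) 1 with hb0
    have hseteq : Ioo (qa:ℝ) qb ∩ A' = A ∩ Ioo a0 b0 := by
      rw [hA'def]
      ext x
      simp only [mem_inter_iff, mem_Ioo, ha0, hb0, max_lt_iff, lt_min_iff]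
      tauto
    have hseteq2 : Ioo (qa:ℝ) qb ∩ Ioo (0:ℝ) 1 = Ioo a0 b0 := by
      ext x
      simp only [mem_inter_iff, mem_Ioo, ha0, hb0, max_lt_iff, lt_min_iff]
      tauto
    rw [hν₁, hν₂, Measure.restrict_apply measurableSet_Ioo, Measure.smul_apply,
      Measure.restrict_apply measurableSet_Ioo, hseteq, hseteq2, smul_eq_mul]
    rcases le_or_gt a0 b0 with hle | hltba
    · rw [G a0 b0 (le_max_right _ _) hle (min_le_right _ _), Real.volume_Ioo]
      rw [← ENNReal.ofReal_ofNat 2, ← ENNReal.ofReal_inv_of_pos (by norm_num : (0:ℝ) < 2),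
        ← ENNReal.ofReal_mul (by norm_num : (0:ℝ) ≤ 2⁻¹)]
      congr 1
      ring
    · rw [Set.Ioo_eq_empty (not_lt.2 (le_of_lt hltba)), inter_empty]
      simp
  have hext : ν₁ = ν₂ := Real.measure_ext_Ioo_rat hkey
  have hv1 : ν₁ A' = ENNReal.ofReal (1/2) := by
    rw [hν₁, Measure.restrict_apply hA', inter_self, hvolA']
  have hv2 : ν₂ A' = 2⁻¹ * ENNReal.ofReal (1/2) := by
    rw [hν₂, Measure.smul_apply, Measure.restrict_apply hA', smul_eq_mul]
    congr 1
    rw [hA'def, inter_assoc, inter_self]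
    exact hvolA'
  rw [hext, hv2] at hv1
  have := congrArg ENNReal.toReal hv1
  rw [ENNReal.toReal_mul, ENNReal.toReal_ofReal (by norm_num)] at this
  simp only [ENNReal.toReal_inv, ENNReal.toReal_ofNat] at this
  norm_num at this
lemma ne3 (n : ℕ) : (3:ℝ)/2^(n+1) ≠ 1 := by
  intro h
  rw [div_eq_one_iff_eq (by positivity : ((2:ℝ)^(n+1)) ≠ 0)] at h
  rcases n with _ | m
  · norm_num at h
  · have h4 : (4:ℝ) ≤ 2^(m+1+1) := by
      calc (4:ℝ) = 2^2 := by norm_num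
        _ ≤ 2^(m+2) := by
          apply pow_le_pow_right₀ (by norm_num)
          omega
    linarith

lemma mem_I (y : ℝ) (h0 : 0 < y) (h1 : y < 1) (hne : ∀ m : ℕ, y ≠ 1/2^m) :
    ∃ m : ℕ, y ∈ Ioo ((1:ℝ)/2^(m+1)) (1/2^m) := by
  have hPex : ∃ m : ℕ, (1:ℝ)/2^(m+1) < y := by
    obtain ⟨m, hm⟩ := exists_pow_lt_of_lt_one h0 (by norm_num : (1:ℝ)/2 < 1)
    rw [div_pow, one_pow] at hm
    refine ⟨m, lt_of_le_of_lt ?_ hm⟩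
    apply div_le_div_of_nonneg_left (by norm_num) (by positivity)
    apply pow_le_pow_right₀ (by norm_num)
    omega
  classical
  set m := Nat.find hPex with hmdef
  refine ⟨m, Nat.find_spec hPex, ?_⟩
  rcases Nat.eq_zero_or_pos m with hz | hpos
  · rw [hz]; simpa using h1
  · have hnot := Nat.find_min hPex (show m - 1 < m by omega)
    have hsub : m - 1 + 1 = m := by omega
    rw [hsub] at hnot
    exact lt_of_le_of_ne (le_of_not_gt hnot) (hne m)

end Forest6

open Filter in
/-- with `φ₁ x = 1 - x` and `φ₂ x = 3/2^(n+1) - x` on `(1/2^(n+1), 1/2^n)`,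
the Borel forest of lines `L = graph φ₁ ∪ graph φ₂` is not generated by an automorphism:
there is no measure-preserving automorphism `θ` of `([0,1], Lebesgue)` such that, almost
everywhere, the set of `L`-neighbours `{φ₁ x, φ₂ x}` of `x` equals `{θ x, θ⁻¹ x}`
(i.e. `L = graph θ ∪ graph θ⁻¹` up to null sets). -/
theorem forest_of_lines_not_generated_by_automorphism (φ₁ φ₂ : ℝ → ℝ)
    (h1 : ∀ x, φ₁ x = 1 - x)
    (h2 : ∀ n : ℕ, ∀ x ∈ Set.Ioo ((1 : ℝ) / 2 ^ (n + 1)) (1 / 2 ^ n),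
      φ₂ x = 3 / 2 ^ (n + 1) - x) :
    ¬ ∃ θ θinv : ℝ → ℝ,
        MeasurePreserving θ (volume.restrict (Set.Icc (0 : ℝ) 1))
          (volume.restrict (Set.Icc (0 : ℝ) 1)) ∧
        MeasurePreserving θinv (volume.restrict (Set.Icc (0 : ℝ) 1))
          (volume.restrict (Set.Icc (0 : ℝ) 1)) ∧
        (∀ᵐ x ∂(volume.restrict (Set.Icc (0 : ℝ) 1)),
          θinv (θ x) = x ∧ θ (θinv x) = x) ∧
        (∀ᵐ x ∂(volume.restrict (Set.Icc (0 : ℝ) 1)),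
          ({φ₁ x, φ₂ x} : Set ℝ) = {θ x, θinv x}) := by
  rintro ⟨θ, θinv, hθ, hθinv, hIdent, hPair⟩
  set A : Set ℝ := {t | θ t = 1 - t} with hAdef
  have hA : MeasurableSet A := by
    apply measurableSet_eq_fun hθ.measurable
    fun_prop
  have hQ : ∀ᵐ x ∂(volume : Measure ℝ), x ∈ Icc (0:ℝ) 1 →
      ((θinv (θ x) = x ∧ θ (θinv x) = x) ∧ ({φ₁ x, φ₂ x} : Set ℝ) = {θ x, θinv x}) := by
    rw [← ae_restrict_iff' measurableSet_Icc]
    exact hIdent.and hPair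
  -- dichotomy at good points
  have dich : ∀ (y : ℝ) (n : ℕ), y ∈ Ioo ((1:ℝ)/2^(n+1)) (1/2^n) →
      ({φ₁ y, φ₂ y} : Set ℝ) = {θ y, θinv y} →
      ((θ y = 1 - y ∧ θinv y = 3/2^(n+1) - y) ∨ (θ y = 3/2^(n+1) - y ∧ θinv y = 1 - y)) := by
    intro y n hy hpair
    rw [h1 y, h2 n y hy] at hpair
    rcases Set.pair_eq_pair_iff.1 hpair with ⟨e1, e2⟩ | ⟨e1, e2⟩
    · exact Or.inl ⟨e1.symm, e2.symm⟩
    · exact Or.inr ⟨e2.symm, e1.symm⟩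
  -- interval facts
  have hIccI : ∀ n : ℕ, ∀ z : ℝ, z ∈ Ioo ((1:ℝ)/2^(n+1)) (1/2^n) → z ∈ Icc (0:ℝ) 1 := by
    intro n z hz
    obtain ⟨hz1, hz2⟩ := hz
    have hp1 : (0:ℝ) < 1/2^(n+1) := by positivity
    have hle : (1:ℝ)/2^n ≤ 1 := by
      rw [div_le_one (by positivity)]
      exact one_le_pow₀ (by norm_num)
    constructor <;> [linarith; linarith]
  -- H2
  have H2 : ∀ n : ℕ, ∀ᵐ x ∂(volume : Measure ℝ),
      x ∈ Ioo ((1:ℝ)/2^(n+1)) (1/2^n) → (x ∈ A ↔ (3/2^(n+1) - x) ∉ A) := by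
    intro n
    filter_upwards [hQ, Forest6.aeR (3/2^(n+1)) hQ] with x hx hy hxI
    have he : (2:ℝ)^(n+1) = 2^n * 2 := pow_succ 2 n
    have e1 : (3:ℝ)/2^(n+1) - 1/2^n = 1/2^(n+1) := by rw [he]; field_simp; ring
    have e2 : (3:ℝ)/2^(n+1) - 1/2^(n+1) = 1/2^n := by rw [he]; field_simp; ring
    obtain ⟨hxl, hxr⟩ := hxI
    have hyI : (3/2^(n+1) - x) ∈ Ioo ((1:ℝ)/2^(n+1)) (1/2^n) := by
      constructor <;> [linarith; linarith]
    have hxIcc := hIccI n x ⟨hxl, hxr⟩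
    have hyIcc := hIccI n _ hyI
    obtain ⟨hxid, hxpair⟩ := hx hxIcc
    obtain ⟨hyid, hypair⟩ := hy hyIcc
    have hdx := dich x n ⟨hxl, hxr⟩ hxpair
    have hdy := dich _ n hyI hypair
    have ey : 3/2^(n+1) - (3/2^(n+1) - x) = x := by ring
    simp only [hAdef, Set.mem_setOf_eq]
    constructor
    · intro hxA hyA
      rcases hdx with ⟨hθx, hθi⟩ | ⟨hθx, hθi⟩
      · have h5 : θ (3/2^(n+1) - x) = x := by rw [← hθi]; exact hxid.2
        rw [hyA] at h5
        exact Forest6.ne3 n (by linarith)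
      · rw [hxA] at hθx
        exact Forest6.ne3 n (by linarith)
    · intro hyN
      rcases hdx with ⟨hθx, _⟩ | ⟨hθx, hθi⟩
      · exact hθx
      · rcases hdy with ⟨hθy, _⟩ | ⟨hθy, hθiy⟩
        · exact absurd hθy hyN
        · have h5 : θ (3/2^(n+1) - x) = x := by rw [hθy, ey]
          have h6 := hyid.1
          rw [h5] at h6
          rw [hθi] at h6
          exact absurd (by linarith : (3:ℝ)/2^(n+1) = 1) (Forest6.ne3 n)
  -- H1
  have hCD : ∀ᵐ x ∂(volume : Measure ℝ), x ∉ ⋃ (m : ℕ), {(1:ℝ) - 1/2^m} := by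
    have : volume (⋃ (m : ℕ), {(1:ℝ) - 1/2^m}) = 0 :=
      (Set.countable_iUnion fun m => Set.countable_singleton _).measure_zero volume
    exact measure_eq_zero_iff_ae_notMem.1 this
  have H1 : ∀ᵐ x ∂(volume : Measure ℝ), x ∈ Ioo (0:ℝ) 1 → (x ∈ A ↔ (1 - x) ∉ A) := by
    filter_upwards [hQ, Forest6.aeR 1 hQ, hCD] with x hx hy hxC hxI
    obtain ⟨hx0, hx1⟩ := hxI
    have hyIcc : (1:ℝ) - x ∈ Icc (0:ℝ) 1 := ⟨by linarith, by linarith⟩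
    have hxIcc : x ∈ Icc (0:ℝ) 1 := ⟨le_of_lt hx0, le_of_lt hx1⟩
    have hnedy : ∀ m : ℕ, (1:ℝ) - x ≠ 1/2^m := by
      intro m hm
      exact hxC (Set.mem_iUnion.2 ⟨m, by simp only [Set.mem_singleton_iff]; linarith⟩)
    obtain ⟨m, hyI⟩ := Forest6.mem_I (1 - x) (by linarith) (by linarith) hnedy
    obtain ⟨hyid, hypair⟩ := hy hyIcc
    have hdy := dich (1 - x) m hyI hypair
    simp only [hAdef, Set.mem_setOf_eq]
    constructor
    · intro hxA hyA
      have h5 : θinv (1 - x) = x := by rw [← hxA]; exact (hx hxIcc).1.1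
      rcases hdy with ⟨hθy, hθiy⟩ | ⟨hθy, hθiy⟩
      · have := h5.symm.trans hθiy
        exact absurd (by linarith : (3:ℝ)/2^(m+1) = 1) (Forest6.ne3 m)
      · have := hθy.symm.trans hyA
        exact absurd (by linarith : (3:ℝ)/2^(m+1) = 1) (Forest6.ne3 m)
    · intro hyN
      rcases hdy with ⟨hθy, hθiy⟩ | ⟨hθy, hθiy⟩
      · exact absurd hθy hyN
      · have h5 : θinv (1 - x) = x := by rw [hθiy]; ring
        have h6 := hyid.2
        rw [h5] at h6
        exact h6
  exact Forest6.noA hA H1 H2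
end

section
/- Let G be a measure-preserving 2n-regular countable Borel graph on a standard probability space (X,μ) (symmetric G = flip(G) ⊆ E with exactly 2n neighbours a.e.), H ⊆ G a division (H ⊔ flip(H) = G), and suppose H admits a better path {φ_i : V_{i−1} → V_i, i=1,…,k} with P = ⋃ graph(φ_i). Then H_1 = (H ∖ P) ∪ flip(P) is also a division of G and E(H_1) = E(H) − 2μ(V_0). -/
open MeasureTheory
open scoped ENNReal

/-- The out-degree of `x` in a directed graph `H ⊆ X × X`. -/
noncomputable def outDeg {X : Type*} (H : Set (X × X)) (x : X) : ℕ :=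
  {y | (x, y) ∈ H}.ncard

/-- The error `E(H) = ∫ |n − d_H(x)| dμ(x)` of a division `H`. -/
noncomputable def divErr {X : Type*} [MeasurableSpace X] (μ : Measure X) (n : ℕ)
    (H : Set (X × X)) : ℝ≥0∞ :=
  ∫⁻ x, ((((n : ℤ) - (outDeg H x : ℤ)).natAbs : ℕ) : ℝ≥0∞) ∂μ

/-- `H` is a division of the symmetric graph `G`: `H ⊔ flip(H) = G`. -/
def IsDivision {X : Type*} (G H : Set (X × X)) : Prop :=
  H ∪ (Prod.swap ⁻¹' H) = G ∧ H ∩ (Prod.swap ⁻¹' H) = ∅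

/-!
Reversing the path changes out-degrees only at its endpoints: a vertex inside the path loses its
outgoing path edge and gains the reversed incoming one, a vertex of `V₀` only loses one and a
vertex of `V_k` only gains one. Since `d_H > n` on `V₀` and `d_H < n` on `V_k`, the pointwise
error `|n - d_H|` drops by exactly one on `V₀ ∪ V_k` and is unchanged elsewhere, and the `φᵢ`
being measure preserving gives `μ(V_k) = μ(V₀)`.
-/

open Set Function

theorem outDeg_eq_zero {X : Type*} {H : Set (X × X)} {x : X} (h : ∀ y, (x, y) ∉ H) :
    outDeg H x = 0 := by
  rw [outDeg, show {y | (x, y) ∈ H} = ∅ from eq_empty_iff_forall_notMem.2 h, ncard_empty]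

theorem Fin.apply_eq_apply_zero_of_forall_succ {α : Type*} {k : ℕ} {f : Fin (k + 1) → α}
    (h : ∀ i : Fin k, f i.succ = f i.castSucc) (m : Fin (k + 1)) : f m = f 0 := by
  induction m using Fin.induction with
  | zero => rfl
  | succ i ih => rw [h, ih]

section Reversal

variable {X : Type*} {G H P : Set (X × X)}

theorem IsDivision.diff_union_swap (hH : IsDivision G H) (hPH : P ⊆ H) :
    IsDivision G ((H \ P) ∪ Prod.swap ⁻¹' P) := by
  obtain ⟨hunion, hinter⟩ := hH
  refine ⟨hunion ▸ ?_, eq_empty_iff_forall_notMem.2 fun ⟨x, y⟩ => ?_⟩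
  · ext ⟨x, y⟩
    have hPxy := @hPH (x, y)
    have hPyx := @hPH (y, x)
    simp only [mem_union, mem_sdiff, mem_preimage, Prod.swap_prod_mk] at *
    tauto
  · have hPxy := @hPH (x, y)
    have hPyx := @hPH (y, x)
    have hHxy := eq_empty_iff_forall_notMem.1 hinter (x, y)
    simp only [mem_inter_iff, mem_union, mem_sdiff, mem_preimage, Prod.swap_prod_mk] at *
    tauto

theorem outDeg_diff_union_swap_add (hPH : P ⊆ H) (hH : H ∩ Prod.swap ⁻¹' H = ∅) {x : X}
    (hfin : {y | (x, y) ∈ H ∪ Prod.swap ⁻¹' H}.Finite) :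
    outDeg ((H \ P) ∪ Prod.swap ⁻¹' P) x + outDeg P x =
      outDeg H x + outDeg (Prod.swap ⁻¹' P) x := by
  have hfinH : {y | (x, y) ∈ H}.Finite := hfin.subset fun y hy => Or.inl hy
  have hfinP : {y | (y, x) ∈ P}.Finite := hfin.subset fun y hy => Or.inr (hPH hy)
  have hdisj : Disjoint ({y | (x, y) ∈ H} \ {y | (x, y) ∈ P}) {y | (y, x) ∈ P} :=
    disjoint_left.2 fun y hxy hyx => (eq_empty_iff_forall_notMem.1 hH (x, y)) ⟨hxy.1, hPH hyx⟩
  have hsplit : ({y | (x, y) ∈ H} \ {y | (x, y) ∈ P}).ncard + outDeg P x = outDeg H x :=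
    ncard_sdiff_add_ncard_of_subset (fun y hy => hPH hy) hfinH
  rw [outDeg, show {y | (x, y) ∈ (H \ P) ∪ Prod.swap ⁻¹' P} =
      ({y | (x, y) ∈ H} \ {y | (x, y) ∈ P}) ∪ {y | (y, x) ∈ P} from rfl,
    ncard_union_eq hdisj hfinH.sdiff hfinP, add_right_comm, hsplit]
  rfl

end Reversal

/-- The set `P = ⋃ᵢ graph(φᵢ)` of a better path. -/
def chainGraph {X : Type*} {k : ℕ} (V : Fin (k + 1) → Set X) (φ : Fin k → X → X) :
    Set (X × X) :=
  {p | ∃ i : Fin k, p.1 ∈ V i.castSucc ∧ φ i p.1 = p.2}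

section Chain

variable {X : Type*} {k : ℕ} {V : Fin (k + 1) → Set X} {φ : Fin k → X → X} {x : X}

theorem chainGraph_subset {H : Set (X × X)} (hgraph : ∀ i, ∀ x ∈ V i.castSucc, (x, φ i x) ∈ H) :
    chainGraph V φ ⊆ H := by
  rintro ⟨x, y⟩ ⟨i, hx, rfl : φ i x = y⟩
  exact hgraph i x hx

theorem outDeg_chainGraph_of_mem (hVdisj : Pairwise (Disjoint on V)) {m : Fin (k + 1)}
    (hx : x ∈ V m) : outDeg (chainGraph V φ) x = if m = Fin.last k then 0 else 1 := by
  have hidx : ∀ i : Fin k, x ∈ V i.castSucc → i.castSucc = m := fun i hi =>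
    hVdisj.eq (not_disjoint_iff.2 ⟨x, hi, hx⟩)
  split_ifs with hm
  · exact outDeg_eq_zero fun y ⟨i, hi, _⟩ => Fin.castSucc_ne_last i (hm ▸ hidx i hi)
  · rw [outDeg, ncard_eq_one]
    refine ⟨φ (m.castPred hm) x, ext fun y => ⟨?_, ?_⟩⟩
    · rintro ⟨i, hi, rfl : φ i x = y⟩
      obtain rfl : i = m.castPred hm :=
        Fin.castSucc_injective _ (by rw [hidx i hi, Fin.castSucc_castPred])
      rfl
    · rintro rfl
      exact ⟨_, by rwa [Fin.castSucc_castPred], rfl⟩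

theorem outDeg_chainGraph_of_forall_notMem (hx : ∀ m, x ∉ V m) :
    outDeg (chainGraph V φ) x = 0 :=
  outDeg_eq_zero fun _ ⟨_, hi, _⟩ => hx _ hi

theorem outDeg_swap_chainGraph_of_mem (hVdisj : Pairwise (Disjoint on V))
    (hbij : ∀ i, BijOn (φ i) (V i.castSucc) (V i.succ)) {m : Fin (k + 1)} (hx : x ∈ V m) :
    outDeg (Prod.swap ⁻¹' chainGraph V φ) x = if m = 0 then 0 else 1 := by
  have hidx : ∀ i : Fin k, ∀ y ∈ V i.castSucc, φ i y = x → i.succ = m := fun i y hy hyx =>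
    hVdisj.eq (not_disjoint_iff.2 ⟨x, hyx ▸ (hbij i).mapsTo hy, hx⟩)
  split_ifs with hm
  · exact outDeg_eq_zero fun y ⟨i, hy, hyx⟩ => Fin.succ_ne_zero i (hm ▸ hidx i y hy hyx)
  · have hj : (m.pred hm).succ = m := Fin.succ_pred m hm
    obtain ⟨y₀, hy₀, hy₀x⟩ := (hbij (m.pred hm)).surjOn (hj ▸ hx)
    rw [outDeg, ncard_eq_one]
    refine ⟨y₀, ext fun y => ⟨?_, ?_⟩⟩
    · rintro ⟨i, hy, hyx : φ i y = x⟩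
      obtain rfl : i = m.pred hm := Fin.succ_injective _ ((hidx i y hy hyx).trans hj.symm)
      exact (hbij _).injOn hy hy₀ (hyx.trans hy₀x.symm)
    · rintro rfl
      exact ⟨_, hy₀, hy₀x⟩

theorem outDeg_swap_chainGraph_of_forall_notMem
    (hmaps : ∀ i, MapsTo (φ i) (V i.castSucc) (V i.succ)) (hx : ∀ m, x ∉ V m) :
    outDeg (Prod.swap ⁻¹' chainGraph V φ) x = 0 :=
  outDeg_eq_zero fun _ ⟨i, hy, hyx⟩ => hx _ (hyx ▸ hmaps i hy)

theorem natAbs_sub_outDeg_eq_reverse_chain_add_indicator {n : ℕ} {H : Set (X × X)}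
    (hH : H ∩ Prod.swap ⁻¹' H = ∅) (hPH : chainGraph V φ ⊆ H)
    (hVdisj : Pairwise (Disjoint on V)) (hbij : ∀ i, BijOn (φ i) (V i.castSucc) (V i.succ))
    (hV0 : V 0 ⊆ {x | n < outDeg H x}) (hVk : V (Fin.last k) ⊆ {x | outDeg H x < n})
    (hfin : {y | (x, y) ∈ H ∪ Prod.swap ⁻¹' H}.Finite) :
    ((((n : ℤ) - (outDeg H x : ℤ)).natAbs : ℕ) : ℝ≥0∞) =
      ((((n : ℤ) - (outDeg ((H \ chainGraph V φ) ∪ Prod.swap ⁻¹' chainGraph V φ) x : ℤ)).natAbs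
        : ℕ) : ℝ≥0∞) + (V 0 ∪ V (Fin.last k)).indicator 1 x := by
  have hdeg := outDeg_diff_union_swap_add hPH hH hfin
  have hidx : ∀ {a b}, x ∈ V a → x ∈ V b → a = b := fun ha hb =>
    hVdisj.eq (not_disjoint_iff.2 ⟨x, ha, hb⟩)
  have h0k : x ∈ V 0 → x ∉ V (Fin.last k) := fun h0 hk => lt_asymm (α := ℕ) (hV0 h0) (hVk hk)
  by_cases hxV : ∃ m, x ∈ V m
  · obtain ⟨m, hm⟩ := hxV
    rw [outDeg_chainGraph_of_mem hVdisj hm, outDeg_swap_chainGraph_of_mem hVdisj hbij hm] at hdeg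
    rcases eq_or_ne m 0 with rfl | hm0
    · have hn : n < outDeg H x := hV0 hm
      rw [if_neg fun h : 0 = Fin.last k => h0k hm (h ▸ hm), if_pos rfl] at hdeg
      rw [indicator_of_mem (mem_union_left _ hm), Pi.one_apply, ← Nat.cast_succ]
      congr 1
      omega
    rcases eq_or_ne m (Fin.last k) with rfl | hmk
    · have hn : outDeg H x < n := hVk hm
      rw [if_pos rfl, if_neg hm0] at hdeg
      rw [indicator_of_mem (mem_union_right _ hm), Pi.one_apply, ← Nat.cast_succ]
      congr 1
      omega
    · rw [if_neg hmk, if_neg hm0] at hdeg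
      rw [indicator_of_notMem fun h => h.elim (hm0 ∘ hidx hm) (hmk ∘ hidx hm), add_zero]
      congr 1
      omega
  · push Not at hxV
    rw [outDeg_chainGraph_of_forall_notMem hxV,
      outDeg_swap_chainGraph_of_forall_notMem (fun i => (hbij i).mapsTo) hxV] at hdeg
    rw [indicator_of_notMem fun h => h.elim (hxV 0) (hxV _), add_zero]
    congr 1
    omega

theorem divErr_reverse_chain_add [MeasurableSpace X] {μ : Measure X} {n : ℕ} {H : Set (X × X)}
    (hH : H ∩ Prod.swap ⁻¹' H = ∅) (hPH : chainGraph V φ ⊆ H)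
    (hVdisj : Pairwise (Disjoint on V)) (hbij : ∀ i, BijOn (φ i) (V i.castSucc) (V i.succ))
    (hV0 : V 0 ⊆ {x | n < outDeg H x}) (hVk : V (Fin.last k) ⊆ {x | outDeg H x < n})
    (hfin : ∀ᵐ x ∂μ, {y | (x, y) ∈ H ∪ Prod.swap ⁻¹' H}.Finite)
    (hVmeas : ∀ m, MeasurableSet (V m)) (hμ : μ (V (Fin.last k)) = μ (V 0)) :
    divErr μ n ((H \ chainGraph V φ) ∪ Prod.swap ⁻¹' chainGraph V φ) + 2 * μ (V 0) =
      divErr μ n H := by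
  have hdisj : Disjoint (V 0) (V (Fin.last k)) :=
    disjoint_left.2 fun x h0 hk => lt_asymm (α := ℕ) (hV0 h0) (hVk hk)
  have hends : MeasurableSet (V 0 ∪ V (Fin.last k)) := (hVmeas 0).union (hVmeas _)
  calc _ = divErr μ n ((H \ chainGraph V φ) ∪ Prod.swap ⁻¹' chainGraph V φ) +
        ∫⁻ x, (V 0 ∪ V (Fin.last k)).indicator 1 x ∂μ := by
        rw [lintegral_indicator_one hends, measure_union hdisj (hVmeas _), hμ, two_mul]
    _ = _ := (lintegral_add_right _ (measurable_one.indicator hends)).symm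
    _ = divErr μ n H := lintegral_congr_ae <| hfin.mono fun x hx =>
        (natAbs_sub_outDeg_eq_reverse_chain_add_indicator hH hPH hVdisj hbij hV0 hVk hx).symm

end Chain

theorem better_path_improves_division_general
    {X : Type*} [MeasurableSpace X]
    (μ : Measure X) [IsProbabilityMeasure μ]
    (n : ℕ) (G : Set (X × X))
    (hGreg : ∀ᵐ x ∂μ, ({y | (x, y) ∈ G}).encard = (2 * n : ℕ))
    (H : Set (X × X)) (hH : IsDivision G H)
    (k : ℕ) (V : Fin (k + 1) → Set X) (φ : Fin k → X → X)
    (hVmeas : ∀ i, MeasurableSet (V i))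
    (hVdisj : Pairwise (Function.onFun Disjoint V))
    (hgraph : ∀ (i : Fin k), ∀ x ∈ V i.castSucc, (x, φ i x) ∈ H)
    (hinj : ∀ i, Set.InjOn (φ i) (V i.castSucc))
    (himg : ∀ i, φ i '' V i.castSucc = V i.succ)
    (hφmp : ∀ (i : Fin k), ∀ s ⊆ V i.castSucc, MeasurableSet s → μ (φ i '' s) = μ s)
    (hV0 : V 0 ⊆ {x | n < outDeg H x})
    (hVk : V (Fin.last k) ⊆ {x | outDeg H x < n}) :
    IsDivision G ((H \ {p : X × X | ∃ i : Fin k, p.1 ∈ V i.castSucc ∧ φ i p.1 = p.2}) ∪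
        (Prod.swap ⁻¹' {p : X × X | ∃ i : Fin k, p.1 ∈ V i.castSucc ∧ φ i p.1 = p.2})) ∧
      divErr μ n ((H \ {p : X × X | ∃ i : Fin k, p.1 ∈ V i.castSucc ∧ φ i p.1 = p.2}) ∪
          (Prod.swap ⁻¹' {p : X × X | ∃ i : Fin k, p.1 ∈ V i.castSucc ∧ φ i p.1 = p.2})) =
        divErr μ n H - 2 * μ (V 0) := by
  have hbij : ∀ i, BijOn (φ i) (V i.castSucc) (V i.succ) := fun i =>
    himg i ▸ (hinj i).bijOn_image
  have hPH : chainGraph V φ ⊆ H := chainGraph_subset hgraph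
  have hfin : ∀ᵐ x ∂μ, {y | (x, y) ∈ H ∪ Prod.swap ⁻¹' H}.Finite :=
    hGreg.mono fun x hx => hH.1 ▸ finite_of_encard_eq_coe hx
  have hμ : μ (V (Fin.last k)) = μ (V 0) :=
    Fin.apply_eq_apply_zero_of_forall_succ (f := fun m => μ (V m))
      (fun i => by rw [← himg i, hφmp i _ subset_rfl (hVmeas _)]) _
  exact ⟨hH.diff_union_swap hPH, ENNReal.eq_sub_of_add_eq
    (ENNReal.mul_ne_top ENNReal.ofNat_ne_top (measure_ne_top μ _))
    (divErr_reverse_chain_add hH.2 hPH hVdisj hbij hV0 hVk hfin hVmeas hμ)⟩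

/-- reversing a better path in a division `H` of a measure-preserving
`2n`-regular graph `G` yields a new division `H₁ = (H ∖ P) ∪ flip(P)` with
`E(H₁) = E(H) − 2μ(V₀)`. -/
theorem better_path_improves_division
    {X : Type*} [MeasurableSpace X] [StandardBorelSpace X]
    (μ : Measure X) [IsProbabilityMeasure μ]
    (n : ℕ) (hn : 1 ≤ n) (G : Set (X × X))
    (hGsym : ∀ p : X × X, p ∈ G ↔ (p.2, p.1) ∈ G)
    (hGreg : ∀ᵐ x ∂μ, ({y | (x, y) ∈ G}).encard = (2 * n : ℕ))
    (hmp : ∀ (g : X → X) (A : Set X), MeasurableSet A → Measurable g →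
      Set.InjOn g A → (∀ x ∈ A, (x, g x) ∈ G) → μ (g '' A) = μ A)
    (H : Set (X × X)) (hH : IsDivision G H)
    (k : ℕ) (hk : 1 ≤ k) (V : Fin (k + 1) → Set X) (φ : Fin k → X → X)
    (hVmeas : ∀ i, MeasurableSet (V i))
    (hVdisj : Pairwise (Function.onFun Disjoint V))
    (hgraph : ∀ (i : Fin k), ∀ x ∈ V i.castSucc, (x, φ i x) ∈ H)
    (hmeas : ∀ i, Measurable (φ i))
    (hinj : ∀ i, Set.InjOn (φ i) (V i.castSucc))
    (himg : ∀ i, φ i '' V i.castSucc = V i.succ)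
    (hφmp : ∀ (i : Fin k), ∀ s ⊆ V i.castSucc, MeasurableSet s → μ (φ i '' s) = μ s)
    (hV0 : V 0 ⊆ {x | n < outDeg H x})
    (hVk : V (Fin.last k) ⊆ {x | outDeg H x < n}) :
    IsDivision G ((H \ {p : X × X | ∃ i : Fin k, p.1 ∈ V i.castSucc ∧ φ i p.1 = p.2}) ∪
        (Prod.swap ⁻¹' {p : X × X | ∃ i : Fin k, p.1 ∈ V i.castSucc ∧ φ i p.1 = p.2})) ∧
      divErr μ n ((H \ {p : X × X | ∃ i : Fin k, p.1 ∈ V i.castSucc ∧ φ i p.1 = p.2}) ∪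
          (Prod.swap ⁻¹' {p : X × X | ∃ i : Fin k, p.1 ∈ V i.castSucc ∧ φ i p.1 = p.2})) =
        divErr μ n H - 2 * μ (V 0) :=
  better_path_improves_division_general μ n G hGreg H hH k V φ hVmeas hVdisj hgraph hinj himg hφmp
    hV0 hVk
end
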